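/- arXiv:1202.0542 — 7 statements merged into one kernel-verified Lean document; each statement's English description precedes it below -/
import Mathlib

section
/- Let 𝒢[M⟩ be a star in the Grassmannian 𝒢, i.e. M is a subspace of V such that there exists X ∈ 𝒢 with M ≤ X and dim(X/M) = 1. Then 𝒢[M⟩ ⊆ 𝒢, i.e. every subspace E of V with M ≤ E and dim(E/M) = 1 satisfies E ≅ V/E. -/
/-- The Grassmannian `𝒢` of all subspaces `X ≤ V` with `X ≅ V/X`. -/
def Grass (K V : Type*) [DivisionRing K] [AddCommGroup V] [Module K V] :
    Set (Submodule K V) :=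
  {X | Nonempty (X ≃ₗ[K] (V ⧸ X))}

variable {K V : Type*} [DivisionRing K] [AddCommGroup V] [Module K V]

/-- The dimension of the quotient `E / M` (computed as the rank of `E ⧸ (M ∩ E)`). -/
noncomputable def quotRank (M E : Submodule K V) : Cardinal :=
  Module.rank K (E ⧸ (M.comap E.subtype))

/-- Two subspaces are adjacent if `dim (X/(X ⊓ Y)) = dim (Y/(X ⊓ Y)) = 1`. -/
def Adjacent (X Y : Submodule K V) : Prop :=
  quotRank (X ⊓ Y) X = 1 ∧ quotRank (X ⊓ Y) Y = 1

/-- Two subspaces are distant if they are complementary: `X ⊕ Y = V`. -/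
def Distant (X Y : Submodule K V) : Prop := IsCompl X Y

/-- The star `𝒢[M⟩` with centre `M`. -/
def starSet (M : Submodule K V) : Set (Submodule K V) :=
  {E | M ≤ E ∧ quotRank M E = 1}

/-- `M` is the centre of a star, i.e. there is `X ∈ 𝒢` with `M ≤ X`, `dim (X/M) = 1`. -/
def IsStarCentre (M : Submodule K V) : Prop :=
  ∃ X ∈ Grass K V, M ≤ X ∧ quotRank M X = 1

/-- The top `𝒢⟨N]` with carrier `N`. -/
def topSet (N : Submodule K V) : Set (Submodule K V) :=
  {E | E ≤ N ∧ quotRank E N = 1}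

/-- `N` is the carrier of a top, i.e. there is `X ∈ 𝒢` with `X ≤ N`, `dim (N/X) = 1`. -/
def IsTopCarrier (N : Submodule K V) : Prop :=
  ∃ X ∈ Grass K V, X ≤ N ∧ quotRank X N = 1

/-- An adjacency clique: a set of mutually adjacent elements of `𝒢`. -/
def IsAdjClique (A : Set (Submodule K V)) : Prop :=
  A ⊆ Grass K V ∧ A.Pairwise Adjacent

/-- A maximal adjacency clique. -/
def IsMaxAdjClique (A : Set (Submodule K V)) : Prop :=
  IsAdjClique A ∧ ∀ B, IsAdjClique B → A ⊆ B → A = B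

/-- The pencil `𝒢[M,N] = {X ∈ 𝒢 | M < X < N}`. -/
def pencilSet (M N : Submodule K V) : Set (Submodule K V) :=
  {X ∈ Grass K V | M < X ∧ X < N}

/-- `(M, N)` defines a pencil: there is `X ∈ 𝒢` with `M ≤ X ≤ N` and
`dim (X/M) = dim (N/X) = 1`. -/
def IsPencilPair (M N : Submodule K V) : Prop :=
  ∃ X ∈ Grass K V, M ≤ X ∧ X ≤ N ∧ quotRank M X = 1 ∧ quotRank X N = 1

/-- A pencil in `𝒢`. -/
def IsPencil (S : Set (Submodule K V)) : Prop :=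
  ∃ M N : Submodule K V, IsPencilPair M N ∧ S = pencilSet M N

/-- A point is a one-dimensional subspace. -/
def IsPoint (p : Submodule K V) : Prop := Module.rank K p = 1

/-- A line is a two-dimensional subspace. -/
def IsLine (L : Submodule K V) : Prop := Module.rank K L = 2

/-- Two subspaces meet if they have a common point, i.e. nonzero intersection. -/
def Meets (X Y : Submodule K V) : Prop := X ⊓ Y ≠ ⊥

/-- A distant clique: a set of mutually distant elements of `𝒢`. -/
def IsDistantClique (R : Set (Submodule K V)) : Prop :=
  R ⊆ Grass K V ∧ R.Pairwise Distant

/-- A set has at least three elements. -/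
def HasThree (R : Set (Submodule K V)) : Prop :=
  ∃ A ∈ R, ∃ B ∈ R, ∃ C ∈ R, A ≠ B ∧ A ≠ C ∧ B ≠ C

/-- Condition (R2): if a line meets three mutually distinct elements of `R`
then it meets all elements of `R`. -/
def MeetsThreeMeetsAll (R : Set (Submodule K V)) : Prop :=
  ∀ L : Submodule K V, IsLine L →
    ∀ E₀ ∈ R, ∀ E₁ ∈ R, ∀ E₂ ∈ R, E₀ ≠ E₁ → E₀ ≠ E₂ → E₁ ≠ E₂ →
      Meets L E₀ → Meets L E₁ → Meets L E₂ → ∀ E ∈ R, Meets L E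

/-- A partial `Z`-regulus: conditions (R1) and (R2). -/
def IsPartialZRegulus (R : Set (Submodule K V)) : Prop :=
  (IsDistantClique R ∧ HasThree R) ∧ MeetsThreeMeetsAll R

/-- A `Z`-regulus: a partial `Z`-regulus that is maximal, i.e. not properly
contained in any partial `Z`-regulus. -/
def IsZRegulus (R : Set (Submodule K V)) : Prop :=
  IsPartialZRegulus R ∧ ∀ S : Set (Submodule K V), IsPartialZRegulus S → R ⊆ S → R = S

/-- A directrix of `R`: a line meeting all elements of `R`. -/
def IsDirectrix (R : Set (Submodule K V)) (L : Submodule K V) : Prop :=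
  IsLine L ∧ ∀ E ∈ R, Meets L E

/-- Condition (⊠2) from Theorem `Zreg`. -/
def BoxTwo (R : Set (Submodule K V)) : Prop :=
  ∀ E₀ ∈ R, ∀ E₁ ∈ R, ∀ E₂ ∈ R, E₀ ≠ E₁ → E₀ ≠ E₂ → E₁ ≠ E₂ →
    ∀ W ∈ Grass K V, Adjacent W E₀ → ¬ Distant W E₁ → ¬ Distant W E₂ →
      ∀ E ∈ R, ¬ Distant W E

lemma quotRank_aux1 {M E : Submodule K V} (h : M ≤ E) :
    quotRank M E + Module.rank K M = Module.rank K E := by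
  have := Submodule.rank_quotient_add_rank (M.comap E.subtype)
  rwa [(Submodule.comapSubtypeEquivOfLe h).rank_eq] at this

lemma quotRank_aux2 {M E : Submodule K V} (h : M ≤ E) :
    Module.rank K (V ⧸ E) + quotRank M E = Module.rank K (V ⧸ M) := by
  have e1 : ((V ⧸ M) ⧸ E.map M.mkQ) ≃ₗ[K] V ⧸ E :=
    Submodule.quotientQuotientEquivQuotient M E h
  have hker : LinearMap.ker (M.mkQ.comp E.subtype) = M.comap E.subtype := by
    rw [LinearMap.ker_comp, Submodule.ker_mkQ]
  have hrange : LinearMap.range (M.mkQ.comp E.subtype) = E.map M.mkQ := by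
    rw [LinearMap.range_comp, Submodule.range_subtype]
  have e2 : (E ⧸ M.comap E.subtype) ≃ₗ[K] (E.map M.mkQ : Submodule K (V ⧸ M)) :=
    (Submodule.quotEquivOfEq _ _ hker.symm).trans
      (((M.mkQ.comp E.subtype).quotKerEquivRange).trans
        (LinearEquiv.ofEq _ _ hrange))
  have := Submodule.rank_quotient_add_rank (E.map M.mkQ)
  rw [e1.rank_eq, ← e2.rank_eq] at this
  exact this

/-- Lemma 2.1(1). Every star is contained in the Grassmannian. -/
theorem star_subset_grass (hV : 2 < Module.rank K V) (hG : (Grass K V).Nonempty)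
    (M : Submodule K V) (hM : IsStarCentre M) :
    starSet M ⊆ Grass K V := by
  obtain ⟨X, ⟨eX⟩, hMX, hrX⟩ := hM
  rintro E ⟨hME, hrE⟩
  have h1 : Module.rank K E = Module.rank K X := by
    rw [← quotRank_aux1 hME, ← quotRank_aux1 hMX, hrE, hrX]
  have h2 : Module.rank K (V ⧸ E) = Module.rank K (V ⧸ X) := by
    have a := quotRank_aux2 hME
    have b := quotRank_aux2 hMX
    rw [hrE] at a; rw [hrX] at b
    exact Cardinal.add_one_inj.mp (a.trans b.symm)
  exact LinearEquiv.nonempty_equiv_iff_rank_eq.mpr (by rw [h1, eX.rank_eq, h2])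
end

section
/- Let 𝒢⟨N] be a top in the Grassmannian 𝒢, i.e. N is a subspace of V such that there exists X ∈ 𝒢 with X ≤ N and dim(N/X) = 1. Then: (1) 𝒢⟨N] ⊆ 𝒢; (2) any two distinct elements E, E' of 𝒢⟨N] are adjacent; (3) two adjacent elements E, E' ∈ 𝒢 belong to 𝒢⟨N] if, and only if, E + E' = N. -/
variable {K V : Type*} [DivisionRing K] [AddCommGroup V] [Module K V]

/-! Over a division ring, `E ≤ N` with `quotRank E N = 1` says exactly that `N` covers `E`
(the quotient `N / E` is simple). So the top `𝒢⟨N]` is the set of subspaces covered by `N`, and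
adjacency of `X, Y` says `X ⊓ Y ⋖ X, Y`, equivalently `X, Y ⋖ X ⊔ Y` in the modular lattice of
subspaces; parts (2) and (3) are then lattice theory. For (1), a hyperplane `E ≠ X` of `N` shares
with `X` the common hyperplane `E ⊓ X`, so `dim E = dim X`, and `dim V/E = dim V/N + 1 = dim V/X`. -/

theorem mem_grass_iff_rank_eq {X : Submodule K V} :
    X ∈ Grass K V ↔ Module.rank K X = Module.rank K (V ⧸ X) :=
  Module.nonempty_linearEquiv_iff_rank_eq

theorem quotRank_eq_one_iff_covBy {E N : Submodule K V} (h : E ≤ N) :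
    quotRank E N = 1 ↔ E ⋖ N := by
  rw [covBy_iff_quot_is_simple h, isSimpleModule_iff_finrank_eq_one, quotRank,
    Module.rank_eq_one_iff_finrank_eq_one]

theorem CovBy.quotRank_eq_one {E N : Submodule K V} (h : E ⋖ N) : quotRank E N = 1 :=
  (quotRank_eq_one_iff_covBy h.le).2 h

theorem mem_topSet_iff_covBy {E N : Submodule K V} : E ∈ topSet N ↔ E ⋖ N :=
  ⟨fun h => (quotRank_eq_one_iff_covBy h.1).1 h.2, fun h => ⟨h.le, h.quotRank_eq_one⟩⟩

theorem adjacent_iff_inf_covBy {X Y : Submodule K V} :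
    Adjacent X Y ↔ X ⊓ Y ⋖ X ∧ X ⊓ Y ⋖ Y := by
  rw [Adjacent, quotRank_eq_one_iff_covBy inf_le_left, quotRank_eq_one_iff_covBy inf_le_right]

theorem adjacent_iff_covBy_sup {X Y : Submodule K V} :
    Adjacent X Y ↔ X ⋖ X ⊔ Y ∧ Y ⋖ X ⊔ Y := by
  rw [adjacent_iff_inf_covBy]
  exact ⟨fun h => ⟨covBy_sup_of_inf_covBy_right h.2, covBy_sup_of_inf_covBy_left h.1⟩,
    fun h => ⟨inf_covBy_of_covBy_sup_right h.2, inf_covBy_of_covBy_sup_left h.1⟩⟩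

theorem Adjacent.ne {X Y : Submodule K V} (h : Adjacent X Y) : X ≠ Y := by
  rintro rfl
  have hcov := (adjacent_iff_inf_covBy.1 h).1
  rw [inf_idem] at hcov
  exact hcov.lt.false

theorem adjacent_of_covBy {E E' N : Submodule K V} (hE : E ⋖ N) (hE' : E' ⋖ N)
    (hne : E ≠ E') : Adjacent E E' := by
  rw [adjacent_iff_covBy_sup, hE.wcovBy.sup_eq hE'.wcovBy hne]
  exact ⟨hE, hE'⟩

theorem rank_eq_quotRank_add_rank {E N : Submodule K V} (h : E ≤ N) :
    Module.rank K N = quotRank E N + Module.rank K E := by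
  rw [← Submodule.rank_quotient_add_rank (Submodule.comap N.subtype E),
    (Submodule.comapSubtypeEquivOfLe h).rank_eq, quotRank]

theorem rank_quotient_eq_rank_quotient_add_quotRank {E N : Submodule K V} (h : E ≤ N) :
    Module.rank K (V ⧸ E) = Module.rank K (V ⧸ N) + quotRank E N := by
  have hker : LinearMap.ker (E.mkQ ∘ₗ N.subtype) = Submodule.comap N.subtype E := by
    rw [LinearMap.ker_comp, Submodule.ker_mkQ]
  have hrange : LinearMap.range (E.mkQ ∘ₗ N.subtype) = Submodule.map E.mkQ N := by
    rw [LinearMap.range_comp, Submodule.range_subtype]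
  have hN : (N ⧸ Submodule.comap N.subtype E) ≃ₗ[K] Submodule.map E.mkQ N :=
    (Submodule.quotEquivOfEq _ _ hker.symm).trans
      ((E.mkQ ∘ₗ N.subtype).quotKerEquivRange.trans (LinearEquiv.ofEq _ _ hrange))
  rw [← Submodule.rank_quotient_add_rank (Submodule.map E.mkQ N),
    (Submodule.quotientQuotientEquivQuotient E N h).rank_eq, quotRank, hN.rank_eq]

theorem mem_grass_of_covBy {X E N : Submodule K V} (hX : X ∈ Grass K V) (hXN : X ⋖ N)
    (hEN : E ⋖ N) : E ∈ Grass K V := by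
  rcases eq_or_ne E X with rfl | hne
  · exact hX
  obtain ⟨hE, hX'⟩ := adjacent_iff_inf_covBy.1 (adjacent_of_covBy hEN hXN hne)
  have hrank : Module.rank K E = Module.rank K X := by
    rw [rank_eq_quotRank_add_rank hE.le, hE.quotRank_eq_one,
      rank_eq_quotRank_add_rank hX'.le, hX'.quotRank_eq_one]
  have hquot : Module.rank K (V ⧸ E) = Module.rank K (V ⧸ X) := by
    rw [rank_quotient_eq_rank_quotient_add_quotRank hEN.le, hEN.quotRank_eq_one,
      rank_quotient_eq_rank_quotient_add_quotRank hXN.le, hXN.quotRank_eq_one]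
  rw [mem_grass_iff_rank_eq, hrank, hquot]
  exact mem_grass_iff_rank_eq.1 hX

theorem top_properties_general
    (N : Submodule K V) (hN : IsTopCarrier N) :
    topSet N ⊆ Grass K V ∧
    (∀ E ∈ topSet N, ∀ E' ∈ topSet N, E ≠ E' → Adjacent E E') ∧
    (∀ E ∈ Grass K V, ∀ E' ∈ Grass K V, Adjacent E E' →
      ((E ∈ topSet N ∧ E' ∈ topSet N) ↔ E ⊔ E' = N)) := by
  obtain ⟨X, hXG, hXN, hX1⟩ := hN
  have hX : X ⋖ N := (quotRank_eq_one_iff_covBy hXN).1 hX1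
  simp only [mem_topSet_iff_covBy]
  refine ⟨fun E hE => mem_grass_of_covBy hXG hX (mem_topSet_iff_covBy.1 hE),
    fun E hE E' hE' hne => adjacent_of_covBy hE hE' hne, fun E _ E' _ hadj => ?_⟩
  constructor
  · rintro ⟨hE, hE'⟩
    exact hE.wcovBy.sup_eq hE'.wcovBy hadj.ne
  · rintro rfl
    exact adjacent_iff_covBy_sup.1 hadj

/-- Lemma 2.2. Properties of a top `𝒢⟨N]`: it is contained in `𝒢`,
any two of its distinct elements are adjacent, and two adjacent elements of `𝒢`
belong to it iff their join equals `N`. -/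
theorem top_properties (hV : 2 < Module.rank K V) (hG : (Grass K V).Nonempty)
    (N : Submodule K V) (hN : IsTopCarrier N) :
    topSet N ⊆ Grass K V ∧
    (∀ E ∈ topSet N, ∀ E' ∈ topSet N, E ≠ E' → Adjacent E E') ∧
    (∀ E ∈ Grass K V, ∀ E' ∈ Grass K V, Adjacent E E' →
      ((E ∈ topSet N ∧ E' ∈ topSet N) ↔ E ⊔ E' = N)) :=
  top_properties_general N hN
end

section
/- Let A, B, C ∈ 𝒢 be mutually adjacent. Then there is a star or a top containing all three of them. -/
variable {K V : Type*} [DivisionRing K] [AddCommGroup V] [Module K V]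

lemma submodule_eq_bot_or_top_of_rank_eq_one {Q : Type*} [AddCommGroup Q] [Module K Q]
    (h : Module.rank K Q = 1) (W : Submodule K Q) : W = ⊥ ∨ W = ⊤ := by
  by_cases hW : W = ⊥
  · exact Or.inl hW
  · right
    have hfin : Module.Finite K Q := Module.finite_of_rank_eq_one h
    have hfQ : Module.finrank K Q = 1 := Module.rank_eq_one_iff_finrank_eq_one.mp h
    have hnt : Nontrivial W := (Submodule.nontrivial_iff_ne_bot).mpr hW
    have h1 : 0 < Module.finrank K W := Module.finrank_pos
    have h2 : Module.finrank K W ≤ 1 := hfQ ▸ W.finrank_le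
    exact Submodule.eq_top_of_finrank_eq (by omega)

lemma mid_eq_of_quotRank_one {M X E : Submodule K V} (hMX : M ≤ X) (hXE : X ≤ E)
    (h : quotRank M E = 1) : X = M ∨ X = E := by
  set M' := M.comap E.subtype with hM'
  set X' := X.comap E.subtype with hX'
  rcases submodule_eq_bot_or_top_of_rank_eq_one h (X'.map M'.mkQ) with hW | hW
  · left
    have hle : X' ≤ M' := by
      have := (Submodule.map_le_iff_le_comap).mp hW.le
      rwa [Submodule.comap_bot, Submodule.ker_mkQ] at this
    have : Submodule.map E.subtype X' ≤ Submodule.map E.subtype M' :=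
      Submodule.map_mono hle
    rw [Submodule.map_comap_subtype, Submodule.map_comap_subtype,
      inf_eq_right.mpr hXE] at this
    exact le_antisymm (le_trans this inf_le_right) hMX
  · right
    have hsup : M' ⊔ X' = ⊤ := (Submodule.map_mkQ_eq_top _ _).mp hW
    have hMX' : M' ≤ X' := Submodule.comap_mono hMX
    rw [sup_eq_right.mpr hMX'] at hsup
    exact le_antisymm hXE (Submodule.comap_subtype_eq_top.mp hsup)

lemma quotRank_inf_eq_quotRank_sup (p p' : Submodule K V) :
    quotRank (p ⊓ p') p = quotRank p' (p ⊔ p') :=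
  (LinearMap.quotientInfEquivSupQuotient p p').rank_eq

lemma quotRank_ne_one_of_le {M E : Submodule K V} (h : E ≤ M) : quotRank M E ≠ 1 := by
  have ht : M.comap E.subtype = ⊤ := Submodule.comap_subtype_eq_top.mpr h
  rw [quotRank, ht]
  have : Subsingleton (E ⧸ (⊤ : Submodule K E)) :=
    Submodule.Quotient.subsingleton_iff.mpr rfl
  rw [rank_subsingleton']
  exact zero_ne_one

/-- Lemma 2.3. Three mutually adjacent elements of `𝒢` lie in a
common star or in a common top. -/
theorem three_adjacent_star_or_top (hV : 2 < Module.rank K V)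
    (A B C : Submodule K V) (hA : A ∈ Grass K V) (hB : B ∈ Grass K V) (hC : C ∈ Grass K V)
    (hAB : Adjacent A B) (hAC : Adjacent A C) (hBC : Adjacent B C) :
    (∃ M : Submodule K V, IsStarCentre M ∧
      A ∈ starSet M ∧ B ∈ starSet M ∧ C ∈ starSet M) ∨
    (∃ N : Submodule K V, IsTopCarrier N ∧
      A ∈ topSet N ∧ B ∈ topSet N ∧ C ∈ topSet N) := by
  obtain ⟨hAB1, hAB2⟩ := hAB
  obtain ⟨hAC1, hAC2⟩ := hAC
  obtain ⟨hBC1, hBC2⟩ := hBC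
  by_cases h : A ⊓ B ≤ C
  · -- star case, centre M = A ⊓ B
    left
    set M := A ⊓ B with hM
    have hMA : M ≤ A := inf_le_left
    have hMB : M ≤ B := inf_le_right
    have hMAC : M ≤ A ⊓ C := le_inf hMA h
    have hAC_eq : A ⊓ C = M := by
      rcases mid_eq_of_quotRank_one hMAC inf_le_left hAB1 with h1 | h1
      · exact h1
      · rw [h1] at hAC1
        exact absurd hAC1 (quotRank_ne_one_of_le le_rfl)
    refine ⟨M, ⟨A, hA, hMA, hAB1⟩, ⟨hMA, hAB1⟩, ⟨hMB, hAB2⟩, ⟨hAC_eq ▸ inf_le_right, ?_⟩⟩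
    rw [← hAC_eq]; exact hAC2
  · -- top case, carrier N = A ⊔ B
    right
    set M := A ⊓ B with hM
    set M' := A ⊓ C with hM'
    have hAnotB : ¬ A ≤ B := by
      intro hle
      have : M = A := inf_eq_left.mpr hle
      exact quotRank_ne_one_of_le (this ▸ le_rfl) hAB1
    have hCnotA : ¬ C ≤ A := by
      intro hle
      have : M' = C := inf_eq_right.mpr hle
      exact quotRank_ne_one_of_le (this ▸ le_rfl) hAC2
    -- M ⊔ M' = A
    have hsup : M ⊔ M' = A := by
      rcases mid_eq_of_quotRank_one le_sup_left (sup_le inf_le_left inf_le_left) hAB1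
        with h1 | h1
      · exfalso
        have hM'M : M' ≤ M := le_sup_right.trans h1.le
        rcases mid_eq_of_quotRank_one hM'M inf_le_left hAC1 with h2 | h2
        · exact h (h2 ▸ (inf_le_right : M' ≤ C))
        · exact hAnotB (inf_eq_left.mp h2)
      · exact h1
    have hABC : A ≤ B ⊔ C :=
      hsup ▸ sup_le (inf_le_right.trans le_sup_left) (inf_le_right.trans le_sup_right)
    -- quotRank B (B ⊔ C) = 1
    have hqB : quotRank B (B ⊔ C) = 1 := by
      have := quotRank_inf_eq_quotRank_sup C B
      rw [inf_comm, sup_comm] at this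
      rw [← this]; exact hBC2
    -- A ⊔ B = B ⊔ C
    have hN : A ⊔ B = B ⊔ C := by
      rcases mid_eq_of_quotRank_one (le_sup_right : B ≤ A ⊔ B)
        (sup_le hABC le_sup_left) hqB with h1 | h1
      · exact absurd (sup_eq_right.mp h1) hAnotB
      · exact h1
    -- quotRank A (A ⊔ B) = 1
    have hqA : quotRank A (A ⊔ B) = 1 := by
      have := quotRank_inf_eq_quotRank_sup B A
      rw [inf_comm, sup_comm] at this
      rw [← this]; exact hAB2
    -- A ⊔ C = A ⊔ B
    have hN' : A ⊔ C = A ⊔ B := by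
      rcases mid_eq_of_quotRank_one (le_sup_left : A ≤ A ⊔ C)
        (sup_le le_sup_left (le_sup_right.trans hN.ge)) hqA with h1 | h1
      · exact absurd (sup_eq_left.mp h1) hCnotA
      · exact h1
    set N := A ⊔ B with hNdef
    have hqB' : quotRank B N = 1 := by
      have h2 := quotRank_inf_eq_quotRank_sup A B
      show quotRank B (A ⊔ B) = 1
      rw [← h2]; exact hAB1
    have hqC : quotRank C N = 1 := by
      have h2 := quotRank_inf_eq_quotRank_sup A C
      rw [h2, hN'] at hAC1; exact hAC1
    exact ⟨N, ⟨A, hA, le_sup_left, hqA⟩, ⟨le_sup_left, hqA⟩, ⟨le_sup_right, hqB'⟩,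
      ⟨le_sup_right.trans hN.ge, hqC⟩⟩
end

section
/- The pencils in 𝒢 are exactly those subsets of 𝒢 with more than one element that are intersections of two distinct maximal adjacency cliques. -/
variable {K V : Type*} [DivisionRing K] [AddCommGroup V] [Module K V]

section PencilHelpers

variable {K V : Type*} [DivisionRing K] [AddCommGroup V] [Module K V]

/-- `quotRank p q = 1` iff `p` is covered by `q`, for `p ≤ q`. -/
lemma qr_one_iff {p q : Submodule K V} (h : p ≤ q) : quotRank p q = 1 ↔ p ⋖ q := by
  rw [covBy_iff_quot_is_simple h, isSimpleModule_iff_finrank_eq_one,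
    ← Module.rank_eq_one_iff_finrank_eq_one]
  rfl

lemma adjacent_iff {X Y : Submodule K V} :
    Adjacent X Y ↔ (X ⊓ Y ⋖ X ∧ X ⊓ Y ⋖ Y) := by
  unfold Adjacent
  rw [qr_one_iff inf_le_left, qr_one_iff inf_le_right]

lemma rank_covBy {p q : Submodule K V} (h : p ⋖ q) :
    Module.rank K q = Module.rank K p + 1 := by
  have h1 : quotRank p q = 1 := (qr_one_iff h.le).mpr h
  have h2 := Submodule.rank_quotient_add_rank (p.comap q.subtype)
  have e : Module.rank K (p.comap q.subtype) = Module.rank K p :=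
    (Submodule.comapSubtypeEquivOfLe h.le).rank_eq
  rw [e] at h2
  have h1' : Module.rank K (↥q ⧸ p.comap q.subtype) = 1 := h1
  rw [h1'] at h2
  rw [← h2, add_comm]

lemma corank_covBy {p q : Submodule K V} (h : p ⋖ q) :
    Module.rank K (V ⧸ p) = Module.rank K (V ⧸ q) + 1 := by
  set q' : Submodule K (V ⧸ p) := q.map p.mkQ with hq'
  have h1 := Submodule.rank_quotient_add_rank q'
  have e1 : Module.rank K ((V ⧸ p) ⧸ q') = Module.rank K (V ⧸ q) :=
    (Submodule.quotientQuotientEquivQuotient p q h.le).rank_eq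
  have e2 : Module.rank K q' = 1 := by
    have hker : LinearMap.ker (p.mkQ.comp q.subtype) = p.comap q.subtype := by
      rw [LinearMap.ker_comp, Submodule.ker_mkQ]
    have hran : LinearMap.range (p.mkQ.comp q.subtype) = q' := by
      rw [LinearMap.range_comp, Submodule.range_subtype]
    have e := (p.mkQ.comp q.subtype).quotKerEquivRange.rank_eq
    rw [hker, hran] at e
    rw [← e]
    exact (qr_one_iff h.le).mpr h
  rw [e1, e2] at h1
  exact h1.symm

lemma card_succ_inj {a b : Cardinal} (h : a + 1 = b + 1) : a = b := by
  rcases le_or_gt Cardinal.aleph0 a with ha | ha <;>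
    rcases le_or_gt Cardinal.aleph0 b with hb | hb
  · rw [Cardinal.add_one_eq ha, Cardinal.add_one_eq hb] at h; exact h
  · exfalso
    rw [Cardinal.add_one_eq ha] at h
    exact absurd (h ▸ Cardinal.add_lt_aleph0 hb Cardinal.one_lt_aleph0) (not_lt.mpr ha)
  · exfalso
    rw [Cardinal.add_one_eq hb] at h
    exact absurd (h ▸ Cardinal.add_lt_aleph0 ha Cardinal.one_lt_aleph0) (not_lt.mpr hb)
  · obtain ⟨n, rfl⟩ := Cardinal.lt_aleph0.1 ha
    obtain ⟨m, rfl⟩ := Cardinal.lt_aleph0.1 hb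
    have : n + 1 = m + 1 := by exact_mod_cast h
    exact_mod_cast Nat.succ_injective this

lemma card_le_one_of_lt_two {a : Cardinal} (h : a < 2) : a ≤ 1 := by
  have h2 : (2 : Cardinal) < Cardinal.aleph0 := by
    exact_mod_cast Cardinal.nat_lt_aleph0 2
  obtain ⟨n, rfl⟩ := Cardinal.lt_aleph0.1 (h.trans h2)
  have hn : n < 2 := by exact_mod_cast h
  have : n ≤ 1 := by omega
  exact_mod_cast this

lemma grass_transfer {X Y : Submodule K V} (hX : X ∈ Grass K V)
    (h1 : Module.rank K X = Module.rank K Y)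
    (h2 : Module.rank K (V ⧸ X) = Module.rank K (V ⧸ Y)) : Y ∈ Grass K V := by
  obtain ⟨e⟩ := hX
  obtain ⟨e1⟩ := nonempty_linearEquiv_of_rank_eq h1.symm
  obtain ⟨e2⟩ := nonempty_linearEquiv_of_rank_eq h2
  exact ⟨e1.trans (e.trans e2)⟩

lemma grass_two_le {X : Submodule K V} (hX : X ∈ Grass K V)
    (hV : 2 < Module.rank K V) :
    2 ≤ Module.rank K X ∧ 2 ≤ Module.rank K (V ⧸ X) := by
  obtain ⟨e⟩ := hX
  have he : Module.rank K X = Module.rank K (V ⧸ X) := e.rank_eq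
  have hsum := Submodule.rank_quotient_add_rank X
  by_contra hc
  have h2 : Module.rank K (V ⧸ X) < 2 := by
    rcases not_and_or.mp hc with h | h
    · rw [← he]; exact not_le.mp h
    · exact not_le.mp h
  have h2' : Module.rank K X < 2 := he ▸ h2
  have hle : Module.rank K V ≤ 2 := by
    rw [← hsum]
    calc Module.rank K (V ⧸ X) + Module.rank K X ≤ 1 + 1 :=
          add_le_add (card_le_one_of_lt_two h2) (card_le_one_of_lt_two h2')
      _ = 2 := one_add_one_eq_two
  exact absurd hV (not_lt.mpr hle)

lemma grass_ne_bot {X : Submodule K V} (hX : X ∈ Grass K V)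
    (hV : 2 < Module.rank K V) : X ≠ ⊥ := by
  intro h
  have := (grass_two_le hX hV).1
  rw [h, rank_bot] at this
  rw [le_zero_iff] at this
  exact OfNat.ofNat_ne_zero 2 this

lemma grass_ne_top {X : Submodule K V} (hX : X ∈ Grass K V)
    (hV : 2 < Module.rank K V) : X ≠ ⊤ := by
  intro h
  have h2 := (grass_two_le hX hV).2
  have : Subsingleton (V ⧸ X) := Submodule.Quotient.subsingleton_iff.mpr h
  rw [rank_zero_iff.mpr this] at h2
  exact absurd h2 (by norm_num)

lemma grass_of_covBy_covBy {M X Y : Submodule K V} (hX : X ∈ Grass K V)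
    (h1 : M ⋖ X) (h2 : M ⋖ Y) : Y ∈ Grass K V := by
  apply grass_transfer hX
  · rw [rank_covBy h1, rank_covBy h2]
  · apply card_succ_inj
    rw [← corank_covBy h1, ← corank_covBy h2]

lemma grass_of_covBy_covBy' {N X Y : Submodule K V} (hX : X ∈ Grass K V)
    (h1 : X ⋖ N) (h2 : Y ⋖ N) : Y ∈ Grass K V := by
  apply grass_transfer hX
  · apply card_succ_inj
    rw [← rank_covBy h1, ← rank_covBy h2]
  · rw [corank_covBy h1, corank_covBy h2]

lemma covBy_sup_span {M : Submodule K V} {v : V} (hv : v ∉ M) :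
    M ⋖ M ⊔ Submodule.span K {v} := by
  have hv0 : v ≠ 0 := fun h => hv (h ▸ M.zero_mem)
  have hatom : IsAtom (Submodule.span K {v}) := nonzero_span_atom v hv0
  have hinf : Submodule.span K {v} ⊓ M = ⊥ := by
    rcases (inf_le_left :
        Submodule.span K {v} ⊓ M ≤ Submodule.span K {v}).lt_or_eq with h | h
    · exact hatom.2 _ h
    · exfalso
      apply hv
      have hvmem : v ∈ Submodule.span K {v} ⊓ M := by
        rw [h]; exact Submodule.mem_span_singleton_self v
      exact hvmem.2
  have hcov : Submodule.span K {v} ⊓ M ⋖ Submodule.span K {v} := by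
    rw [hinf]; exact bot_covBy_iff.mpr hatom
  have h2 := covBy_sup_of_inf_covBy_left hcov
  rwa [sup_comm] at h2

lemma exists_covBy_avoid {Y N : Submodule K V} (hYN : Y ≤ N) {w : V}
    (hwN : w ∈ N) (hwY : w ∉ Y) : ∃ X, Y ≤ X ∧ X ⋖ N ∧ w ∉ X := by
  set s : Set (Submodule K V) := {X | Y ≤ X ∧ X ≤ N ∧ w ∉ X} with hs
  have hzorn : ∀ c ⊆ s, IsChain (· ≤ ·) c → ∀ y ∈ c, ∃ ub ∈ s, ∀ z ∈ c, z ≤ ub := by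
    intro c hcs hchain y hy
    refine ⟨sSup c, ⟨(hcs hy).1.trans (le_sSup hy), sSup_le fun z hz => (hcs hz).2.1, ?_⟩,
      fun z hz => le_sSup hz⟩
    intro hw
    rw [Submodule.mem_sSup_of_directed ⟨y, hy⟩ hchain.directedOn] at hw
    obtain ⟨z, hzc, hwz⟩ := hw
    exact (hcs hzc).2.2 hwz
  obtain ⟨m, hYm, hm⟩ := zorn_le_nonempty₀ s hzorn Y ⟨le_rfl, hYN, hwY⟩
  obtain ⟨hYm', hmN, hwm⟩ := hm.1
  refine ⟨m, hYm, ?_, hwm⟩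
  have hlt : m < N := lt_of_le_of_ne hmN (fun h => hwm (h ▸ hwN))
  have key : ∀ u ∈ N, u ∉ m → w ∈ m ⊔ Submodule.span K {u} := by
    intro u huN hum
    by_contra hw
    have hmem : (m ⊔ Submodule.span K {u}) ∈ s :=
      ⟨hYm'.trans le_sup_left,
        sup_le hmN ((Submodule.span_singleton_le_iff_mem u N).mpr huN), hw⟩
    have hle : m ⊔ Submodule.span K {u} ≤ m := hm.2 hmem le_sup_left
    exact hum ((le_sup_right.trans hle) (Submodule.mem_span_singleton_self u))
  have hsup : m ⊔ Submodule.span K {w} = N := by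
    apply le_antisymm
      (sup_le hmN ((Submodule.span_singleton_le_iff_mem w N).mpr hwN))
    intro u huN
    by_cases hum : u ∈ m
    · exact Submodule.mem_sup_left hum
    · have hw' := key u huN hum
      rw [Submodule.mem_sup] at hw'
      obtain ⟨x, hx, y, hy, hxy⟩ := hw'
      rw [Submodule.mem_span_singleton] at hy
      obtain ⟨c, rfl⟩ := hy
      have hc : c ≠ 0 := by
        rintro rfl
        rw [zero_smul, add_zero] at hxy
        exact hwm (hxy ▸ hx)
      have hwx : w - x = c • u := by rw [← hxy]; abel
      have hu : u = c⁻¹ • (w - x) := by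
        rw [hwx, smul_smul, inv_mul_cancel₀ hc, one_smul]
      rw [hu]
      exact Submodule.smul_mem _ _ (Submodule.sub_mem _
        (Submodule.mem_sup_right (Submodule.mem_span_singleton_self w))
        (Submodule.mem_sup_left hx))
  constructor
  · exact hlt
  · intro B hmB hBN
    obtain ⟨u, huB, hum⟩ := SetLike.exists_of_lt hmB
    have hw' : w ∈ m ⊔ Submodule.span K {u} := key u (hBN.le huB) hum
    have hwB : w ∈ B :=
      (sup_le hmB.le ((Submodule.span_singleton_le_iff_mem u B).mpr huB)) hw'
    have hNB : N ≤ B := by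
      rw [← hsup]
      exact sup_le hmB.le ((Submodule.span_singleton_le_iff_mem w B).mpr hwB)
    exact lt_irrefl _ (hBN.trans_le hNB)

lemma star_eq (M : Submodule K V) : starSet M = {E | M ⋖ E} := by
  ext E
  constructor
  · rintro ⟨h1, h2⟩; exact (qr_one_iff h1).mp h2
  · intro h; exact ⟨h.le, (qr_one_iff h.le).mpr h⟩

lemma top_eq (N : Submodule K V) : topSet N = {E | E ⋖ N} := by
  ext E
  constructor
  · rintro ⟨h1, h2⟩; exact (qr_one_iff h1).mp h2
  · intro h; exact ⟨h.le, (qr_one_iff h.le).mpr h⟩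

lemma star_pair_inf {M X Y : Submodule K V} (hX : M ⋖ X) (hY : M ⋖ Y)
    (hne : X ≠ Y) : X ⊓ Y = M := by
  rcases hX.eq_or_eq (le_inf hX.le hY.le) inf_le_left with h | h
  · exact h
  · exfalso
    have hXY : X ≤ Y := inf_eq_left.mp h
    rcases hY.eq_or_eq hX.le hXY with h' | h'
    · exact hX.lt.ne' h'
    · exact hne h'

lemma top_pair_sup {N X Y : Submodule K V} (hX : X ⋖ N) (hY : Y ⋖ N)
    (hne : X ≠ Y) : X ⊔ Y = N := by
  rcases hX.eq_or_eq le_sup_left (sup_le hX.le hY.le) with h | h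
  · exfalso
    have hYX : Y ≤ X := sup_eq_left.mp h
    rcases hY.eq_or_eq hYX hX.le with h' | h'
    · exact hne h'
    · exact hX.lt.ne h'
  · exact h

lemma star_clique {M X₀ : Submodule K V} (hX₀ : X₀ ∈ Grass K V) (hMX : M ⋖ X₀) :
    IsAdjClique (starSet M) := by
  rw [star_eq]
  constructor
  · intro E hE; exact grass_of_covBy_covBy hX₀ hMX hE
  · intro X hX Y hY hne
    rw [adjacent_iff, star_pair_inf hX hY hne]
    exact ⟨hX, hY⟩

lemma top_clique {N X₀ : Submodule K V} (hX₀ : X₀ ∈ Grass K V) (hXN : X₀ ⋖ N) :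
    IsAdjClique (topSet N) := by
  rw [top_eq]
  constructor
  · intro E hE; exact grass_of_covBy_covBy' hX₀ hXN hE
  · intro X hX Y hY hne
    have hsup : X ⊔ Y = N := top_pair_sup hX hY hne
    rw [adjacent_iff]
    constructor
    · have := inf_covBy_of_covBy_sup_left (a := Y) (b := X)
        (by rw [sup_comm, hsup]; exact hY)
      rwa [inf_comm] at this
    · exact inf_covBy_of_covBy_sup_left (a := X) (b := Y) (by rw [hsup]; exact hX)

lemma ne_top_of_covBy_grass {X N : Submodule K V} (hX : X ∈ Grass K V)
    (hV : 2 < Module.rank K V) (h : X ⋖ N) : N ≠ ⊤ := by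
  intro hN
  have h2 := (grass_two_le hX hV).2
  have hc := corank_covBy h
  have : Subsingleton (V ⧸ N) := Submodule.Quotient.subsingleton_iff.mpr hN
  rw [rank_zero_iff.mpr this, zero_add] at hc
  rw [hc] at h2
  exact absurd h2 (by norm_num)


lemma star_max {M X₀ : Submodule K V} (hV : 2 < Module.rank K V)
    (hX₀ : X₀ ∈ Grass K V) (hMX : M ⋖ X₀) : IsMaxAdjClique (starSet M) := by
  refine ⟨star_clique hX₀ hMX, fun B hB hsub => ?_⟩
  refine Set.Subset.antisymm hsub fun Z hZB => ?_
  rw [star_eq]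
  show M ⋖ Z
  have hadj : ∀ X : Submodule K V, M ⋖ X → X ≠ Z → (Z ⊓ X ⋖ Z ∧ Z ⊓ X ⋖ X) := by
    intro X hX hne
    have hXB : X ∈ B := hsub (by rw [star_eq]; exact hX)
    have h := hB.2 hZB hXB (fun h => hne h.symm)
    rwa [adjacent_iff] at h
  by_cases hMZ : M ≤ Z
  · have hne : M ≠ Z := by
      rintro rfl
      have h := hadj X₀ hMX (fun h => hMX.lt.ne' h)
      rw [inf_eq_left.mpr hMX.le] at h
      exact h.1.lt.false
    have hlt : M < Z := hMZ.lt_of_ne hne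
    by_contra hMZcov
    obtain ⟨Y, hMY, hYZ⟩ := (not_covBy_iff hlt).mp hMZcov
    obtain ⟨y, hyY, hyM⟩ := SetLike.exists_of_lt hMY
    have hXcov : M ⋖ M ⊔ Submodule.span K {y} := covBy_sup_span hyM
    have hXY : M ⊔ Submodule.span K {y} ≤ Y :=
      sup_le hMY.le ((Submodule.span_singleton_le_iff_mem y Y).mpr hyY)
    have hneZ : M ⊔ Submodule.span K {y} ≠ Z := fun h => (hXY.trans_lt hYZ).ne h
    have h := hadj _ hXcov hneZ
    rw [inf_eq_right.mpr (hXY.trans hYZ.le)] at h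
    exact h.2.lt.false.elim
  · exfalso
    have hZne : ∀ X : Submodule K V, M ⋖ X → X ≠ Z := by
      intro X hX h; exact hMZ (h ▸ hX.le)
    have claim : ∀ X X' : Submodule K V, M ⋖ X → M ⋖ X' → X ≠ X' → Z ≤ X ⊔ X' := by
      intro X X' hX hX' hne'
      have h1 := hadj X hX (hZne X hX)
      have h2 := hadj X' hX' (hZne X' hX')
      by_cases hab : Z ⊓ X = Z ⊓ X'
      · exfalso
        have haM : Z ⊓ X ≤ M := by
          rw [← star_pair_inf hX hX' hne']
          exact le_inf inf_le_right (hab.le.trans inf_le_right)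
        rcases h1.2.eq_or_eq haM hX.le with h | h
        · exact hMZ (le_of_eq_of_le h inf_le_left)
        · exact hX.lt.ne h
      · have hZsup : Z ⊓ X ⊔ Z ⊓ X' = Z := top_pair_sup h1.1 h2.1 hab
        rw [← hZsup]
        exact sup_le_sup inf_le_right inf_le_right
    have hX₀top : X₀ ≠ ⊤ := grass_ne_top hX₀ hV
    obtain ⟨v₁, -, hv₁⟩ := SetLike.exists_of_lt hX₀top.lt_top
    have hv₁M : v₁ ∉ M := fun h => hv₁ (hMX.le h)
    set X₁ := M ⊔ Submodule.span K {v₁} with hX₁def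
    have hX₁cov : M ⋖ X₁ := covBy_sup_span hv₁M
    have hv₁X₁ : v₁ ∈ X₁ :=
      Submodule.mem_sup_right (Submodule.mem_span_singleton_self v₁)
    have hX₀X₁ : X₀ ≠ X₁ := fun h => hv₁ (h ▸ hv₁X₁)
    have hcovN₀ : X₀ ⋖ X₀ ⊔ X₁ :=
      covBy_sup_of_inf_covBy_right
        (by rw [star_pair_inf hMX hX₁cov hX₀X₁]; exact hX₁cov)
    have hN₀top : X₀ ⊔ X₁ ≠ ⊤ := ne_top_of_covBy_grass hX₀ hV hcovN₀
    obtain ⟨v₂, -, hv₂⟩ := SetLike.exists_of_lt hN₀top.lt_top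
    have hv₂M : v₂ ∉ M := fun h => hv₂ ((hMX.le.trans le_sup_left) h)
    set X₂ := M ⊔ Submodule.span K {v₂} with hX₂def
    have hX₂cov : M ⋖ X₂ := covBy_sup_span hv₂M
    have hv₂X₂ : v₂ ∈ X₂ :=
      Submodule.mem_sup_right (Submodule.mem_span_singleton_self v₂)
    have hX₀X₂ : X₀ ≠ X₂ := by
      intro h
      apply hv₂
      apply Submodule.mem_sup_left
      rw [h]
      exact hv₂X₂
    have hZX₁ : Z ≤ X₀ ⊔ X₁ := claim X₀ X₁ hMX hX₁cov hX₀X₁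
    have hZX₂ : Z ≤ X₀ ⊔ X₂ := claim X₀ X₂ hMX hX₂cov hX₀X₂
    have hcovN₁ : X₀ ⋖ X₀ ⊔ X₂ :=
      covBy_sup_of_inf_covBy_right
        (by rw [star_pair_inf hMX hX₂cov hX₀X₂]; exact hX₂cov)
    have hinter : (X₀ ⊔ X₁) ⊓ (X₀ ⊔ X₂) = X₀ := by
      rcases hcovN₀.eq_or_eq (le_inf le_sup_left le_sup_left) inf_le_left with h | h
      · exact h
      · exfalso
        have hN₀N₁ : X₀ ⊔ X₁ ≤ X₀ ⊔ X₂ := inf_eq_left.mp h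
        rcases hcovN₁.eq_or_eq le_sup_left hN₀N₁ with h' | h'
        · exact hcovN₀.lt.ne' h'
        · apply hv₂
          rw [h']
          exact Submodule.mem_sup_right hv₂X₂
    have hZX₀' : Z ≤ X₀ := (le_inf hZX₁ hZX₂).trans hinter.le
    have h := hadj X₀ hMX (hZne X₀ hMX)
    rw [inf_eq_left.mpr hZX₀'] at h
    exact h.1.lt.false

lemma top_max {N X₀ : Submodule K V} (hV : 2 < Module.rank K V)
    (hX₀ : X₀ ∈ Grass K V) (hXN : X₀ ⋖ N) : IsMaxAdjClique (topSet N) := by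
  refine ⟨top_clique hX₀ hXN, fun B hB hsub => ?_⟩
  refine Set.Subset.antisymm hsub fun Z hZB => ?_
  rw [top_eq]
  show Z ⋖ N
  have hadj : ∀ X : Submodule K V, X ⋖ N → X ≠ Z → (Z ⊓ X ⋖ Z ∧ Z ⊓ X ⋖ X) := by
    intro X hX hne
    have hXB : X ∈ B := hsub (by rw [top_eq]; exact hX)
    have h := hB.2 hZB hXB (fun h => hne h.symm)
    rwa [adjacent_iff] at h
  by_cases hZN : Z ≤ N
  · have hne : Z ≠ N := by
      rintro rfl
      have h := hadj X₀ hXN (fun h => hXN.lt.ne h)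
      rw [inf_eq_right.mpr hXN.le] at h
      exact h.2.lt.false
    have hlt : Z < N := hZN.lt_of_ne hne
    by_contra hZNcov
    obtain ⟨Y, hZY, hYN⟩ := (not_covBy_iff hlt).mp hZNcov
    obtain ⟨w, hwN, hwY⟩ := SetLike.exists_of_lt hYN
    obtain ⟨X, hYX, hXcov, hwX⟩ := exists_covBy_avoid hYN.le hwN hwY
    have hZX : Z ≤ X := hZY.le.trans hYX
    have hneZ : X ≠ Z := fun h => (hZY.trans_le hYX).ne' h
    have h := hadj X hXcov hneZ
    rw [inf_eq_left.mpr hZX] at h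
    exact h.1.lt.false.elim
  · exfalso
    have hZne : ∀ X : Submodule K V, X ⋖ N → X ≠ Z := by
      intro X hX h; exact hZN (h ▸ hX.le)
    have claim : ∀ X X' : Submodule K V, X ⋖ N → X' ⋖ N → X ≠ X' → X ⊓ X' ≤ Z := by
      intro X X' hX hX' hne'
      have h1 := hadj X hX (hZne X hX)
      have h2 := hadj X' hX' (hZne X' hX')
      -- diamond: Z ⋖ Z ⊔ X and X ⋖ Z ⊔ X
      have hda : Z ⋖ Z ⊔ X := by
        have := covBy_sup_of_inf_covBy_left (a := X) (b := Z)
          (by rw [inf_comm]; exact h1.2)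
        rwa [sup_comm] at this
      have hda' : X ⋖ Z ⊔ X :=
        covBy_sup_of_inf_covBy_left (a := Z) (b := X) h1.1
      have hdb : Z ⋖ Z ⊔ X' := by
        have := covBy_sup_of_inf_covBy_left (a := X') (b := Z)
          (by rw [inf_comm]; exact h2.2)
        rwa [sup_comm] at this
      by_cases hab : Z ⊔ X = Z ⊔ X'
      · exfalso
        have hNa : N ≤ Z ⊔ X := by
          rw [← top_pair_sup hX hX' hne']
          exact sup_le le_sup_right (hab.symm.le.trans' le_sup_right)
        rcases hda'.eq_or_eq hX.le hNa with h | h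
        · exact hX.lt.ne' h
        · exact hZN (h ▸ le_sup_left)
      · have hZinf : (Z ⊔ X) ⊓ (Z ⊔ X') = Z := star_pair_inf hda hdb hab
        rw [← hZinf]
        exact le_inf (inf_le_left.trans le_sup_right) (inf_le_right.trans le_sup_right)
    have hX₀bot : X₀ ≠ ⊥ := grass_ne_bot hX₀ hV
    obtain ⟨x₀, hx₀X, hx₀⟩ := SetLike.exists_of_lt hX₀bot.bot_lt
    have hx₀0 : x₀ ∉ (⊥ : Submodule K V) := hx₀
    obtain ⟨X₁, -, hX₁cov, hx₀X₁⟩ :=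
      exists_covBy_avoid (bot_le : (⊥ : Submodule K V) ≤ N) (hXN.le hx₀X) hx₀0
    have hX₀X₁ : X₀ ≠ X₁ := fun h => hx₀X₁ (h ▸ hx₀X)
    have hM₀Z : X₀ ⊓ X₁ ≤ Z := claim X₀ X₁ hXN hX₁cov hX₀X₁
    have hM₀cov : X₀ ⊓ X₁ ⋖ X₀ := by
      have h := inf_covBy_of_covBy_sup_left (a := X₁) (b := X₀)
        (by rw [top_pair_sup hX₁cov hXN (Ne.symm hX₀X₁)]; exact hX₁cov)
      rwa [inf_comm] at h
    obtain ⟨m, hmX₀, hmM₀⟩ := SetLike.exists_of_lt hM₀cov.lt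
    have hspan_le : ¬ X₀ ≤ Submodule.span K {m} := by
      intro hle
      have h2 := (grass_two_le hX₀ hV).1
      have h3 : Module.rank K X₀ ≤ Module.rank K (Submodule.span K {m}) :=
        Submodule.rank_mono hle
      have h1 : Module.rank K (Submodule.span K {m}) ≤ 1 := by
        have h4 := rank_span_le (R := K) ({m} : Set V)
        rwa [Cardinal.mk_singleton] at h4
      have hlt : (1 : Cardinal) < 2 := by exact_mod_cast Nat.one_lt_two
      exact hlt.not_ge (h2.trans (h3.trans h1))
    obtain ⟨w, hwX₀, hwspan⟩ := SetLike.not_le_iff_exists.mp hspan_le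
    obtain ⟨X₂, hmX₂le, hX₂cov, hwX₂⟩ :=
      exists_covBy_avoid
        ((Submodule.span_singleton_le_iff_mem m N).mpr (hXN.le hmX₀))
        (hXN.le hwX₀) hwspan
    have hX₀X₂ : X₀ ≠ X₂ := fun h => hwX₂ (h ▸ hwX₀)
    have hM₁Z : X₀ ⊓ X₂ ≤ Z := claim X₀ X₂ hXN hX₂cov hX₀X₂
    have hmX₂ : m ∈ X₂ := hmX₂le (Submodule.mem_span_singleton_self m)
    have hM₁nleM₀ : ¬ X₀ ⊓ X₂ ≤ X₀ ⊓ X₁ := fun h => hmM₀ (h ⟨hmX₀, hmX₂⟩)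
    have hsupX₀ : (X₀ ⊓ X₁) ⊔ (X₀ ⊓ X₂) = X₀ := by
      rcases hM₀cov.eq_or_eq le_sup_left (sup_le inf_le_left inf_le_left) with h | h
      · exact absurd (le_sup_right.trans h.le) hM₁nleM₀
      · exact h
    have hX₀Z : X₀ ≤ Z := hsupX₀ ▸ sup_le hM₀Z hM₁Z
    have h := hadj X₀ hXN (hZne X₀ hXN)
    rw [inf_eq_right.mpr hX₀Z] at h
    exact h.2.lt.false


lemma pencil_mem_covBy {M N X Y : Submodule K V} (hMX : M ⋖ X) (hXN : X ⋖ N)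
    (h1 : M < Y) (h2 : Y < N) : M ⋖ Y ∧ Y ⋖ N := by
  by_cases hXY : Y = X
  · subst hXY; exact ⟨hMX, hXN⟩
  have hXinf : X ⊓ Y = M := by
    rcases hMX.eq_or_eq (le_inf hMX.le h1.le) inf_le_left with h | h
    · exact h
    · exfalso
      have hXle : X ≤ Y := inf_eq_left.mp h
      rcases hXN.eq_or_eq hXle h2.le with h' | h'
      · exact hXY h'
      · exact h2.ne h'
  have hXsup : X ⊔ Y = N := by
    rcases hXN.eq_or_eq le_sup_left (sup_le hXN.le h2.le) with h | h
    · exfalso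
      have hYle : Y ≤ X := sup_eq_left.mp h
      rcases hMX.eq_or_eq h1.le hYle with h' | h'
      · exact h1.ne' h'
      · exact hXY h'
    · exact h
  constructor
  · have h := inf_covBy_of_covBy_sup_left (a := X) (b := Y)
      (by rw [hXsup]; exact hXN)
    rwa [hXinf] at h
  · have h := covBy_sup_of_inf_covBy_left (a := X) (b := Y)
      (by rw [hXinf]; exact hMX)
    rwa [hXsup] at h

lemma pencil_eq_inter {M N X : Submodule K V} (hXG : X ∈ Grass K V)
    (h1 : M ⋖ X) (h2 : X ⋖ N) : pencilSet M N = starSet M ∩ topSet N := by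
  rw [star_eq, top_eq]
  ext Y
  simp only [pencilSet, Set.mem_setOf_eq, Set.mem_inter_iff, Set.mem_sep_iff]
  constructor
  · rintro ⟨hYG, hMY, hYN⟩
    exact pencil_mem_covBy h1 h2 hMY hYN
  · rintro ⟨hMY, hYN⟩
    exact ⟨grass_of_covBy_covBy hXG h1 hMY, hMY.lt, hYN.lt⟩

lemma pencil_second {M N X : Submodule K V} (h1 : M ⋖ X) (h2 : X ⋖ N) :
    ∃ Y, (M ⋖ Y ∧ Y ⋖ N) ∧ Y ≠ X := by
  obtain ⟨u, huN, huX⟩ := SetLike.exists_of_lt h2.lt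
  have huM : u ∉ M := fun h => huX (h1.le h)
  set Y := M ⊔ Submodule.span K {u} with hYdef
  have hMY : M ⋖ Y := covBy_sup_span huM
  have hYN : Y ≤ N := sup_le (h1.le.trans h2.le)
    ((Submodule.span_singleton_le_iff_mem u N).mpr huN)
  have huY : u ∈ Y :=
    Submodule.mem_sup_right (Submodule.mem_span_singleton_self u)
  have hYX : Y ≠ X := fun h => huX (h ▸ huY)
  have hYltN : Y < N := by
    rcases hYN.lt_or_eq with h | h
    · exact h
    · exfalso
      have hc : M ⋖ N := h ▸ hMY
      exact hc.2 h1.lt h2.lt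
  exact ⟨Y, pencil_mem_covBy h1 h2 hMY.lt hYltN, hYX⟩

lemma star_ne_top {M N X : Submodule K V} (hV : 2 < Module.rank K V)
    (hXG : X ∈ Grass K V) (h1 : M ⋖ X) (h2 : X ⋖ N) : starSet M ≠ topSet N := by
  intro h
  have hNtop : N ≠ ⊤ := ne_top_of_covBy_grass hXG hV h2
  obtain ⟨v, -, hvN⟩ := SetLike.exists_of_lt hNtop.lt_top
  have hvM : v ∉ M := fun hm => hvN ((h1.le.trans h2.le) hm)
  have hmem : M ⊔ Submodule.span K {v} ∈ starSet M := by
    rw [star_eq]; exact covBy_sup_span hvM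
  rw [h, top_eq] at hmem
  exact hvN (hmem.le
    (Submodule.mem_sup_right (Submodule.mem_span_singleton_self v)))

lemma maxclique_classify {A : Set (Submodule K V)} (hA : IsMaxAdjClique A)
    {X Y : Submodule K V} (hX : X ∈ A) (hY : Y ∈ A) (hne : X ≠ Y) :
    A = starSet (X ⊓ Y) ∨ A = topSet (X ⊔ Y) := by
  have hXG : X ∈ Grass K V := hA.1.1 hX
  have hadjXY := hA.1.2 hX hY hne
  rw [adjacent_iff] at hadjXY
  set M := X ⊓ Y with hMdef
  set N := X ⊔ Y with hNdef
  obtain ⟨hMX, hMY⟩ := hadjXY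
  have hXN : X ⋖ N := covBy_sup_of_inf_covBy_right hMY
  have hYN : Y ⋖ N := covBy_sup_of_inf_covBy_left hMX
  have step1 : ∀ Z ∈ A, M ≤ Z → M ⋖ Z := by
    intro Z hZ hMZ
    by_cases hZX : Z = X
    · subst hZX; exact hMX
    have hadj := hA.1.2 hZ hX hZX
    rw [adjacent_iff] at hadj
    rcases hMX.eq_or_eq (le_inf hMZ hMX.le) inf_le_right with h | h
    · rw [h] at hadj; exact hadj.1
    · exfalso; rw [h] at hadj; exact hadj.2.lt.false
  have step2 : ∀ Z ∈ A, Z ≤ N → Z ⋖ N := by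
    intro Z hZ hZN
    by_cases hZX : Z = X
    · subst hZX; exact hXN
    have hadj := hA.1.2 hZ hX hZX
    rw [adjacent_iff] at hadj
    rcases hXN.eq_or_eq le_sup_right (sup_le hZN hXN.le) with h | h
    · exfalso
      have hZle : Z ≤ X := sup_eq_right.mp h
      rw [inf_eq_left.mpr hZle] at hadj
      exact hadj.1.lt.false
    · have hcov := covBy_sup_of_inf_covBy_left (a := X) (b := Z)
        (by rw [inf_comm]; exact hadj.2)
      rwa [sup_comm X Z, h] at hcov
  have step3 : ∀ Z ∈ A, M ≤ Z ∨ Z ≤ N := by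
    intro Z hZ
    by_cases hZX : Z = X
    · subst hZX; exact Or.inl inf_le_left
    by_cases hZY : Z = Y
    · subst hZY; exact Or.inl inf_le_right
    have h1 := hA.1.2 hZ hX hZX
    rw [adjacent_iff] at h1
    have h2 := hA.1.2 hZ hY hZY
    rw [adjacent_iff] at h2
    by_cases hab : Z ⊓ X = Z ⊓ Y
    · left
      have haM : Z ⊓ X ≤ M := le_inf inf_le_right (hab.le.trans inf_le_right)
      rcases h1.2.eq_or_eq haM hMX.le with h | h
      · exact le_of_eq_of_le h inf_le_left
      · exact absurd h hMX.lt.ne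
    · right
      rw [← top_pair_sup h1.1 h2.1 hab]
      exact sup_le (inf_le_right.trans le_sup_left) (inf_le_right.trans le_sup_right)
  by_cases hall : ∀ Z ∈ A, Z ⋖ N
  · right
    exact hA.2 (topSet N) (top_clique hXG hXN)
      (fun Z hZ => by rw [top_eq]; exact hall Z hZ)
  · left
    push_neg at hall
    obtain ⟨Z, hZA, hZN⟩ := hall
    have hZnle : ¬ Z ≤ N := fun h => hZN (step2 Z hZA h)
    have hMZ : M ⋖ Z := step1 Z hZA ((step3 Z hZA).resolve_right hZnle)
    apply hA.2 (starSet M) (star_clique hXG hMX)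
    intro W hWA
    rw [star_eq]
    show M ⋖ W
    by_cases hMW : M ≤ W
    · exact step1 W hWA hMW
    exfalso
    have hWN : W ⋖ N := step2 W hWA ((step3 W hWA).resolve_left hMW)
    have hWX : W ≠ X := fun h => hMW (h ▸ hMX.le)
    have hWZ : W ≠ Z := fun h => hMW (h ▸ hMZ.le)
    have hZX : Z ≠ X := fun h => hZnle (h ▸ hXN.le)
    have hinfZX : Z ⊓ X = M := star_pair_inf hMZ hMX hZX
    have hXN' : X ⋖ X ⊔ Z :=
      covBy_sup_of_inf_covBy_right (by rw [inf_comm, hinfZX]; exact hMZ)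
    have hadjWX := hA.1.2 hWA hX hWX
    rw [adjacent_iff] at hadjWX
    have hadjWZ := hA.1.2 hWA hZA hWZ
    rw [adjacent_iff] at hadjWZ
    have hWle : W ≤ X ⊔ Z := by
      by_cases hab : W ⊓ X = W ⊓ Z
      · exfalso
        have haM : W ⊓ X ≤ M := by
          rw [← hinfZX]
          exact le_inf (hab.le.trans inf_le_right) inf_le_right
        rcases hadjWX.2.eq_or_eq haM hMX.le with h | h
        · exact hMW (le_of_eq_of_le h inf_le_left)
        · exact hMX.lt.ne h
      · rw [← top_pair_sup hadjWX.1 hadjWZ.1 hab]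
        exact sup_le (inf_le_right.trans le_sup_left)
          (inf_le_right.trans le_sup_right)
    have hinterX : N ⊓ (X ⊔ Z) = X := by
      rcases hXN'.eq_or_eq (le_inf hXN.le le_sup_left) inf_le_right with h | h
      · exact h
      · exfalso
        have hle : X ⊔ Z ≤ N := inf_eq_right.mp h
        exact hZnle (le_sup_right.trans hle)
    have hWX' : W ≤ X := by
      rw [← hinterX]; exact le_inf hWN.le hWle
    rw [inf_eq_left.mpr hWX'] at hadjWX
    exact hadjWX.1.lt.false

end PencilHelpers

/-- Theorem 2.6. The pencils are exactly the subsets of `𝒢` with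
more than one element that are intersections of two distinct maximal adjacency
cliques. -/
theorem pencil_iff_inter_maxCliques (hV : 2 < Module.rank K V) (hG : (Grass K V).Nonempty)
    (S : Set (Submodule K V)) :
    IsPencil S ↔
      (S.Nontrivial ∧ ∃ A B : Set (Submodule K V),
        IsMaxAdjClique A ∧ IsMaxAdjClique B ∧ A ≠ B ∧ S = A ∩ B) := by
  constructor
  · rintro ⟨M, N, ⟨Xh, hXG, hMXle, hXNle, hq1, hq2⟩, rfl⟩
    have hMX : M ⋖ Xh := (qr_one_iff hMXle).mp hq1
    have hXN : Xh ⋖ N := (qr_one_iff hXNle).mp hq2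
    constructor
    · obtain ⟨Y, ⟨hMY, hYN⟩, hYX⟩ := pencil_second hMX hXN
      exact ⟨Xh, ⟨hXG, hMX.lt, hXN.lt⟩,
        Y, ⟨grass_of_covBy_covBy hXG hMX hMY, hMY.lt, hYN.lt⟩,
        fun h => hYX h.symm⟩
    · exact ⟨starSet M, topSet N, star_max hV hXG hMX, top_max hV hXG hXN,
        star_ne_top hV hXG hMX hXN, pencil_eq_inter hXG hMX hXN⟩
  · rintro ⟨hS, A, B, hA, hB, hAB, rfl⟩
    obtain ⟨X, hX, Y, hY, hne⟩ := hS
    have hXG : X ∈ Grass K V := hA.1.1 hX.1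
    have hadj := hA.1.2 hX.1 hY.1 hne
    rw [adjacent_iff] at hadj
    have hMX : X ⊓ Y ⋖ X := hadj.1
    have hXN : X ⋖ X ⊔ Y := covBy_sup_of_inf_covBy_right hadj.2
    refine ⟨X ⊓ Y, X ⊔ Y,
      ⟨X, hXG, inf_le_left, le_sup_left, (qr_one_iff inf_le_left).mpr hMX,
        (qr_one_iff le_sup_left).mpr hXN⟩, ?_⟩
    rw [pencil_eq_inter hXG hMX hXN]
    rcases maxclique_classify hA hX.1 hY.1 hne with hA' | hA' <;>
      rcases maxclique_classify hB hX.2 hY.2 hne with hB' | hB'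
    · exact absurd (hA'.trans hB'.symm) hAB
    · rw [hA', hB']
    · rw [hA', hB', Set.inter_comm]
    · exact absurd (hA'.trans hB'.symm) hAB
end

section
/- Every pencil 𝒢[M,N] in 𝒢 contains at least three elements (in fact it has |K| + 1 elements). -/
variable {K V : Type*} [DivisionRing K] [AddCommGroup V] [Module K V]

/-! Along `M < X₀ < N` both quotient dimensions are `1`, so `N/M` is a plane and the subspaces
strictly between `M` and `N` correspond to the lines of that plane, of which there are `|K| + 1`.
Each such `X` again has `dim X/M = dim N/X = 1`; since subspaces of vector spaces split, this gives
`X ≅ X₀` and `V/X ≅ V/X₀`, so `X ≅ X₀ ≅ V/X₀ ≅ V/X`. Hence membership in `𝒢` is automatic and the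
pencil is the whole open interval `(M, N)`. -/

universe u v w

open Cardinal Set Submodule

theorem quotRank_eq_rank_map (A B : Submodule K V) :
    quotRank A B = Module.rank K (B.map A.mkQ) := by
  have e := (A.mkQ.comp B.subtype).quotKerEquivRange
  rw [LinearMap.ker_comp, ker_mkQ, LinearMap.range_comp, range_subtype] at e
  exact e.rank_eq

theorem quotRank_map_mkQ {M A : Submodule K V} (hMA : M ≤ A) (B : Submodule K V) :
    quotRank (A.map M.mkQ) (B.map M.mkQ) = quotRank A B := by
  let e := quotientQuotientEquivQuotient M A hMA
  have he : ((e : _ →ₗ[K] V ⧸ A) ∘ₗ (A.map M.mkQ).mkQ) ∘ₗ M.mkQ = A.mkQ := by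
    ext; rfl
  rw [quotRank_eq_rank_map, quotRank_eq_rank_map, (e.submoduleMap _).rank_eq,
    ← map_comp, ← map_comp, he]

theorem rank_add_quotRank {X N : Submodule K V} (hXN : X ≤ N) :
    Module.rank K X + quotRank X N = Module.rank K N := by
  rw [← rank_quotient_add_rank_of_divisionRing (X.comap N.subtype),
    (comapSubtypeEquivOfLe hXN).rank_eq, add_comm]
  rfl

theorem quotRank_add_quotRank {M X N : Submodule K V} (hMX : M ≤ X) (hXN : X ≤ N) :
    quotRank M X + quotRank X N = quotRank M N := by
  rw [← quotRank_map_mkQ hMX N, quotRank_eq_rank_map M X, quotRank_eq_rank_map M N]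
  exact rank_add_quotRank (map_mono hXN)

theorem one_le_quotRank {A B : Submodule K V} (h : ¬ B ≤ A) : 1 ≤ quotRank A B := by
  have : Nontrivial (B ⧸ A.comap B.subtype) :=
    Quotient.nontrivial_iff.2 (mt comap_subtype_eq_top.1 h)
  exact Cardinal.one_le_iff_pos.2 rank_pos

theorem Cardinal.eq_one_of_add_eq_two {a b : Cardinal} (h : a + b = 2) (ha : 1 ≤ a)
    (hb : 1 ≤ b) : a = 1 := by
  have h2 : (2 : Cardinal) < ℵ₀ := natCast_lt_aleph0
  obtain ⟨n, rfl⟩ := lt_aleph0.1 ((le_self_add.trans h.le).trans_lt h2)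
  obtain ⟨m, rfl⟩ := lt_aleph0.1 ((le_add_self.trans h.le).trans_lt h2)
  norm_cast at h ha hb ⊢
  omega

theorem quotRank_eq_one_of_lt_of_lt {M X N : Submodule K V} (hMN : quotRank M N = 2)
    (hMX : M < X) (hXN : X < N) : quotRank M X = 1 ∧ quotRank X N = 1 := by
  have hsum := quotRank_add_quotRank hMX.le hXN.le
  rw [hMN] at hsum
  have h₁ := one_le_quotRank hMX.not_ge
  have h₂ := one_le_quotRank hXN.not_ge
  exact ⟨eq_one_of_add_eq_two hsum h₁ h₂, eq_one_of_add_eq_two ((add_comm _ _).trans hsum) h₂ h₁⟩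

theorem nonempty_linearEquiv_of_quotRank_eq {M A B : Submodule K V} (hMA : M ≤ A)
    (hMB : M ≤ B) (h : quotRank M A = quotRank M B) : Nonempty (A ≃ₗ[K] B) := by
  obtain ⟨eA⟩ := quotient_prod_linearEquiv (M.comap A.subtype)
  obtain ⟨eB⟩ := quotient_prod_linearEquiv (M.comap B.subtype)
  obtain ⟨e⟩ := nonempty_linearEquiv_of_rank_eq h
  exact ⟨eA.symm ≪≫ₗ e.prodCongr
    ((comapSubtypeEquivOfLe hMA).trans (comapSubtypeEquivOfLe hMB).symm) ≪≫ₗ eB⟩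

theorem nonempty_quotient_linearEquiv_of_quotRank_eq {A B N : Submodule K V} (hAN : A ≤ N)
    (hBN : B ≤ N) (h : quotRank A N = quotRank B N) :
    Nonempty ((V ⧸ A) ≃ₗ[K] (V ⧸ B)) := by
  obtain ⟨eA⟩ := quotient_prod_linearEquiv (N.map A.mkQ)
  obtain ⟨eB⟩ := quotient_prod_linearEquiv (N.map B.mkQ)
  rw [quotRank_eq_rank_map, quotRank_eq_rank_map] at h
  obtain ⟨e⟩ := nonempty_linearEquiv_of_rank_eq h
  exact ⟨eA.symm ≪≫ₗ ((quotientQuotientEquivQuotient A N hAN).trans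
    (quotientQuotientEquivQuotient B N hBN).symm).prodCongr e ≪≫ₗ eB⟩

theorem mem_Grass_of_quotRank_eq {M N X₀ X : Submodule K V} (hX₀ : X₀ ∈ Grass K V)
    (hMX₀ : M ≤ X₀) (hX₀N : X₀ ≤ N) (hMX : M ≤ X) (hXN : X ≤ N)
    (h₁ : quotRank M X = quotRank M X₀) (h₂ : quotRank X N = quotRank X₀ N) :
    X ∈ Grass K V := by
  obtain ⟨e₀⟩ := hX₀
  obtain ⟨e₁⟩ := nonempty_linearEquiv_of_quotRank_eq hMX hMX₀ h₁
  obtain ⟨e₂⟩ := nonempty_quotient_linearEquiv_of_quotRank_eq hX₀N hXN h₂.symm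
  exact ⟨e₁ ≪≫ₗ e₀ ≪≫ₗ e₂⟩

namespace IsPencilPair

variable {M N : Submodule K V}

theorem le (h : IsPencilPair M N) : M ≤ N :=
  let ⟨_, _, hMX, hXN, _⟩ := h
  hMX.trans hXN

theorem quotRank_eq_two (h : IsPencilPair M N) : quotRank M N = 2 := by
  obtain ⟨X, -, hMX, hXN, h₁, h₂⟩ := h
  rw [← quotRank_add_quotRank hMX hXN, h₁, h₂, one_add_one_eq_two]

theorem pencilSet_eq_Ioo (h : IsPencilPair M N) : pencilSet M N = Ioo M N := by
  refine Set.ext fun X => ⟨fun hX => hX.2, fun hX => ⟨?_, hX⟩⟩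
  obtain ⟨hX₁, hX₂⟩ := quotRank_eq_one_of_lt_of_lt h.quotRank_eq_two hX.1 hX.2
  obtain ⟨X₀, hX₀, hMX₀, hX₀N, h₁, h₂⟩ := h
  exact mem_Grass_of_quotRank_eq hX₀ hMX₀ hX₀N hX.1.le hX.2.le (hX₁.trans h₁.symm)
    (hX₂.trans h₂.symm)

end IsPencilPair

theorem OrderEmbedding.lift_mk_Ioo_eq {α : Type u} {β : Type w} [Preorder α] [Preorder β]
    (e : α ↪o β) (he : (range e).OrdConnected) (a b : α) :
    lift.{w} #(Ioo a b) = lift.{u} #(Ioo (e a) (e b)) := by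
  rw [← e.image_Ioo he, mk_image_eq_lift _ _ e.injective]

section

variable {R E : Type*} [Ring R] [AddCommGroup E] [Module R E]

theorem Submodule.range_mapSubtype_orderEmbedding (p : Submodule R E) :
    range (MapSubtype.orderEmbedding p) = Iic p := by
  ext q
  refine ⟨?_, fun hq => ⟨q.comap p.subtype, ?_⟩⟩
  · rintro ⟨q, rfl⟩
    exact map_subtype_le p q
  · rw [map_subtype_embedding_eq, map_comap_subtype, inf_eq_right.2 hq]

theorem Submodule.range_comapMkQOrderEmbedding (p : Submodule R E) :
    range (comapMkQOrderEmbedding p) = Ici p := by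
  ext q
  refine ⟨?_, fun hq => ⟨q.map p.mkQ, ?_⟩⟩
  · rintro ⟨q, rfl⟩
    exact (ker_mkQ p).symm.trans_le (LinearMap.ker_le_comap _)
  · rw [comapMkQOrderEmbedding_eq, comap_map_mkQ, sup_eq_right.2 hq]

end

theorem mk_Ioo_eq_mk_Ioo_bot_top {M N : Submodule K V} (hMN : M ≤ N) :
    #(Ioo M N) = #(Ioo (⊥ : Submodule K (N ⧸ M.comap N.subtype)) ⊤) := by
  have hN := (MapSubtype.orderEmbedding N).lift_mk_Ioo_eq
    (by rw [range_mapSubtype_orderEmbedding]; exact ordConnected_Iic) (M.comap N.subtype) ⊤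
  have hM := (comapMkQOrderEmbedding (M.comap N.subtype)).lift_mk_Ioo_eq
    (by rw [range_comapMkQOrderEmbedding]; exact ordConnected_Ici) ⊥ ⊤
  simp only [lift_id, map_subtype_embedding_eq, map_comap_subtype, inf_eq_right.2 hMN,
    map_subtype_top, comapMkQOrderEmbedding_eq, comap_bot, ker_mkQ, comap_top] at hN hM
  rw [← hN, hM]

theorem mem_Ioo_bot_top_iff_exists_eq_span_singleton {W : Type*} [AddCommGroup W] [Module K W]
    [FiniteDimensional K W] (hW : Module.finrank K W = 2) {Z : Submodule K W} :
    Z ∈ Ioo ⊥ ⊤ ↔ ∃ v ≠ 0, Z = K ∙ v := by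
  constructor
  · rintro ⟨hbot, htop⟩
    have h₀ : 1 ≤ Module.finrank K Z := one_le_finrank_iff.2 hbot.ne'
    have h₂ : Module.finrank K Z < 2 := hW ▸ finrank_lt htop.ne
    have h₁ : Module.finrank K Z = 1 := by omega
    let P := Projectivization.mk'' Z h₁
    exact ⟨P.rep, P.rep_nonzero, (Projectivization.submodule_mk'' Z h₁).symm.trans P.submodule_eq⟩
  · rintro ⟨v, hv, rfl⟩
    refine ⟨bot_lt_iff_ne_bot.2 (by simpa using hv), lt_top_iff_ne_top.2 fun h => ?_⟩
    have := finrank_span_singleton (K := K) hv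
    rw [h, finrank_top, hW] at this
    exact absurd this (by norm_num)

/-- The lines of `K²` indexed by the projective line `K ∪ {∞}`. -/
def projLine (K : Type*) [DivisionRing K] : Option K → Submodule K (K × K)
  | none => K ∙ (1, 0)
  | some a => K ∙ (a, 1)

theorem projLine_mem_Ioo (o : Option K) : projLine K o ∈ Ioo ⊥ ⊤ := by
  refine (mem_Ioo_bot_top_iff_exists_eq_span_singleton (by simp)).2 ?_
  cases o with
  | none => exact ⟨(1, 0), by simp, rfl⟩
  | some a => exact ⟨(a, 1), by simp, rfl⟩

theorem projLine_injective : Function.Injective (projLine K) := by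
  rintro (_ | a) (_ | b) h <;>
    simp only [projLine, span_singleton_eq_span_singleton, Prod.smul_mk, Prod.mk.injEq,
      Units.smul_def, smul_eq_mul, mul_one, mul_zero] at h ⊢
  · obtain ⟨z, -, h⟩ := h
    exact absurd h zero_ne_one
  · obtain ⟨z, -, h⟩ := h
    exact absurd h z.ne_zero
  · obtain ⟨z, rfl, h⟩ := h
    rw [h, one_mul]

theorem exists_projLine_eq {Z : Submodule K (K × K)} (hZ : Z ∈ Ioo ⊥ ⊤) :
    ∃ o, projLine K o = Z := by
  obtain ⟨v, hv, rfl⟩ := (mem_Ioo_bot_top_iff_exists_eq_span_singleton (by simp)).1 hZ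
  by_cases h₂ : v.2 = 0
  · have h₁ : v.1 ≠ 0 := fun h₁ => hv (Prod.ext h₁ h₂)
    refine ⟨none, ?_⟩
    rw [projLine, ← span_singleton_smul_eq (isUnit_iff_ne_zero.2 (inv_ne_zero h₁)) v]
    exact congrArg (K ∙ ·) (Prod.ext (by simp [h₁]) (by simp [h₂]))
  · refine ⟨some (v.2⁻¹ * v.1), ?_⟩
    rw [projLine, ← span_singleton_smul_eq (isUnit_iff_ne_zero.2 (inv_ne_zero h₂)) v]
    exact congrArg (K ∙ ·) (Prod.ext (by simp) (by simp [h₂]))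

theorem mk_Ioo_bot_top_prod : #(Ioo (⊥ : Submodule K (K × K)) ⊤) = #K + 1 := by
  rw [← mk_option, eq_comm]
  refine mk_congr (Equiv.ofBijective (fun o => ⟨projLine K o, projLine_mem_Ioo o⟩)
    ⟨fun _ _ h => projLine_injective (congrArg Subtype.val h), fun Z => ?_⟩)
  obtain ⟨o, ho⟩ := exists_projLine_eq Z.2
  exact ⟨o, Subtype.ext ho⟩

theorem lift_mk_Ioo_bot_top_of_rank_eq_two {K : Type u} {W : Type w} [DivisionRing K]
    [AddCommGroup W] [Module K W] (hW : Module.rank K W = 2) :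
    lift.{u} #(Ioo (⊥ : Submodule K W) ⊤) = lift.{w} #K + 1 := by
  obtain ⟨e⟩ : Nonempty (W ≃ₗ[K] K × K) :=
    nonempty_linearEquiv_of_lift_rank_eq (by simp [hW, one_add_one_eq_two])
  let f := orderIsoMapComap e
  rw [f.toOrderEmbedding.lift_mk_Ioo_eq (by simp [f.surjective.range_eq, ordConnected_univ]) ⊥ ⊤]
  simp [mk_Ioo_bot_top_prod]

theorem pencil_card_general {K : Type u} {V : Type v}
    [DivisionRing K] [AddCommGroup V] [Module K V]
    (M N : Submodule K V) (hMN : IsPencilPair M N) :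
    3 ≤ Cardinal.mk (pencilSet M N) ∧
      Cardinal.lift.{u} (Cardinal.mk (pencilSet M N)) =
        Cardinal.lift.{v} (Cardinal.mk K) + 1 := by
  have hcard : lift.{u} #(pencilSet M N) = lift.{v} #K + 1 := by
    rw [hMN.pencilSet_eq_Ioo, mk_Ioo_eq_mk_Ioo_bot_top hMN.le]
    exact lift_mk_Ioo_bot_top_of_rank_eq_two hMN.quotRank_eq_two
  refine ⟨?_, hcard⟩
  have h2K : 2 ≤ lift.{v} #K := by simpa using two_le_iff.2 ⟨(0 : K), 1, zero_ne_one⟩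
  rw [← lift_le.{u}, hcard, lift_ofNat]
  calc (3 : Cardinal) = 2 + 1 := by norm_num
    _ ≤ lift.{v} #K + 1 := add_le_add_left h2K 1

/-- Every pencil contains at least three elements; in fact it has
exactly `|K| + 1` elements. -/
theorem pencil_card {K : Type u} {V : Type v}
    [DivisionRing K] [AddCommGroup V] [Module K V]
    (hV : 2 < Module.rank K V)
    (M N : Submodule K V) (hMN : IsPencilPair M N) :
    3 ≤ Cardinal.mk (pencilSet M N) ∧
      Cardinal.lift.{u} (Cardinal.mk (pencilSet M N)) =
        Cardinal.lift.{v} (Cardinal.mk K) + 1 :=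
  pencil_card_general M N hMN
end

section
/- Let ℛ be a partial Z-regulus and let E be any element of ℛ. Then the assignment L ↦ L ∩ E is a bijection from the set of directrices of ℛ onto the set of points of E. Consequently, each point of E lies on a unique directrix of ℛ. -/
variable {K V : Type*} [DivisionRing K] [AddCommGroup V] [Module K V]

open Module Submodule

lemma isPoint_iff_finrank_eq_one {p : Submodule K V} : IsPoint p ↔ finrank K p = 1 :=
  rank_eq_one_iff_finrank_eq_one

lemma isLine_iff_finrank_eq_two {L : Submodule K V} : IsLine L ↔ finrank K L = 2 :=
  rank_eq_ofNat_iff_finrank_eq_ofNat 2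

lemma meets_of_mem {X Y : Submodule K V} {x : V} (hxX : x ∈ X) (hxY : x ∈ Y) (hx : x ≠ 0) :
    Meets X Y :=
  (Submodule.ne_bot_iff _).2 ⟨x, ⟨hxX, hxY⟩, hx⟩

lemma IsPoint.exists_mem_ne_zero {p : Submodule K V} (hp : IsPoint p) : ∃ x ∈ p, x ≠ 0 :=
  (Submodule.ne_bot_iff p).1 (isAtom_iff_finrank_eq_one.2 (isPoint_iff_finrank_eq_one.1 hp)).ne_bot

lemma IsPoint.eq_span_singleton {p : Submodule K V} (hp : IsPoint p) {x : V} (hx : x ∈ p)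
    (hx0 : x ≠ 0) : p = K ∙ x :=
  eq_span_singleton_of_mem_of_finrank_eq_one (isPoint_iff_finrank_eq_one.1 hp) hx hx0

lemma IsLine.isPoint_of_lt {L W : Submodule K V} (hL : IsLine L) (hWL : W < L) (hW : W ≠ ⊥) :
    IsPoint W := by
  rw [isLine_iff_finrank_eq_two] at hL
  have : FiniteDimensional K L := .of_finrank_eq_succ hL
  have : FiniteDimensional K W := .of_injective (inclusion hWL.le) (inclusion_injective hWL.le)
  have hlt := finrank_lt_finrank_of_lt hWL
  have hpos : finrank K W ≠ 0 := fun h => hW (finrank_eq_zero.1 h)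
  rw [isPoint_iff_finrank_eq_one]
  omega

lemma isLine_span_pair {b c : V} (h : LinearIndependent K ![b, c]) : IsLine (span K {b, c}) := by
  rw [isLine_iff_finrank_eq_two, ← Matrix.range_cons_cons_empty b c ![], finrank_span_eq_card h,
    Fintype.card_fin]

lemma IsLine.eq_span_pair {L : Submodule K V} (hL : IsLine L) {b c : V} (hb : b ∈ L)
    (hc : c ∈ L) (h : LinearIndependent K ![b, c]) : L = span K {b, c} := by
  rw [isLine_iff_finrank_eq_two] at hL
  have : FiniteDimensional K L := .of_finrank_eq_succ hL
  refine (eq_of_le_of_finrank_eq ?_ ?_).symm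
  · rw [span_le, Set.insert_subset_iff, Set.singleton_subset_iff]
    exact ⟨hb, hc⟩
  · rw [hL, ← isLine_iff_finrank_eq_two]
    exact isLine_span_pair h

lemma linearIndependent_pair_of_disjoint {E₁ E₂ : Submodule K V} (h : Disjoint E₁ E₂) {b c : V}
    (hb : b ∈ E₁) (hc : c ∈ E₂) (hb0 : b ≠ 0) (hc0 : c ≠ 0) : LinearIndependent K ![b, c] :=
  (LinearIndependent.pair_iff' hb0).2 fun a hab =>
    hc0 (disjoint_def.1 h c (hab ▸ E₁.smul_mem a hb) hc)

section Transversal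

variable {E₁ E₂ : Submodule K V} (h : IsCompl E₁ E₂)

def transversal (x : V) : Submodule K V :=
  span K {E₁.projection E₂ h x, E₂.projection E₁ h.symm x}

lemma mem_transversal (x : V) : x ∈ transversal h x :=
  mem_span_pair.2 ⟨1, 1, by simp only [one_smul, projection_add_projection_eq_self]⟩

variable {x : V}

lemma linearIndependent_projection_pair (hx₁ : x ∉ E₁) (hx₂ : x ∉ E₂) :
    LinearIndependent K ![E₁.projection E₂ h x, E₂.projection E₁ h.symm x] :=
  linearIndependent_pair_of_disjoint h.disjoint (projection_apply_mem _ _)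
    (projection_apply_mem _ _) (mt (projection_apply_eq_zero_iff h).1 hx₂)
    (mt (projection_apply_eq_zero_iff h.symm).1 hx₁)

lemma isLine_transversal (hx₁ : x ∉ E₁) (hx₂ : x ∉ E₂) : IsLine (transversal h x) :=
  isLine_span_pair (linearIndependent_projection_pair h hx₁ hx₂)

lemma meets_transversal_left (hx : x ∉ E₂) : Meets (transversal h x) E₁ :=
  meets_of_mem (subset_span (Set.mem_insert _ _)) (projection_apply_mem _ _)
    (mt (projection_apply_eq_zero_iff h).1 hx)

lemma meets_transversal_right (hx : x ∉ E₁) : Meets (transversal h x) E₂ :=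
  meets_of_mem (subset_span (Set.mem_insert_of_mem _ rfl)) (projection_apply_mem _ _)
    (mt (projection_apply_eq_zero_iff h.symm).1 hx)

lemma projection_mem_of_isLine {L : Submodule K V} (hL : IsLine L) (h₁ : Meets L E₁)
    (h₂ : Meets L E₂) (hxL : x ∈ L) : E₁.projection E₂ h x ∈ L := by
  obtain ⟨b, ⟨hbL, hb⟩, hb0⟩ := (Submodule.ne_bot_iff _).1 h₁
  obtain ⟨c, ⟨hcL, hc⟩, hc0⟩ := (Submodule.ne_bot_iff _).1 h₂
  rw [hL.eq_span_pair hbL hcL (linearIndependent_pair_of_disjoint h.disjoint hb hc hb0 hc0)]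
    at hxL ⊢
  obtain ⟨s, t, rfl⟩ := mem_span_pair.1 hxL
  simp only [map_add, map_smul, projection_apply_of_mem_left h hb,
    projection_apply_of_mem_right h hc, smul_zero, add_zero]
  exact smul_mem _ _ (subset_span (Set.mem_insert _ _))

lemma eq_transversal {L : Submodule K V} (hL : IsLine L) (h₁ : Meets L E₁) (h₂ : Meets L E₂)
    (hxL : x ∈ L) (hx₁ : x ∉ E₁) (hx₂ : x ∉ E₂) : L = transversal h x :=
  hL.eq_span_pair (projection_mem_of_isLine h hL h₁ h₂ hxL)
    (projection_mem_of_isLine h.symm hL h₂ h₁ hxL) (linearIndependent_projection_pair h hx₁ hx₂)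

end Transversal

lemma HasThree.exists_ne_ne {R : Set (Submodule K V)} (hR : HasThree R) (E : Submodule K V) :
    ∃ E₁ ∈ R, ∃ E₂ ∈ R, E₁ ≠ E ∧ E₂ ≠ E ∧ E₁ ≠ E₂ := by
  obtain ⟨A, hA, B, hB, C, hC, hAB, hAC, hBC⟩ := hR
  by_cases hAE : A = E
  · exact ⟨B, hB, C, hC, hAE ▸ hAB.symm, hAE ▸ hAC.symm, hBC⟩
  by_cases hBE : B = E
  · exact ⟨A, hA, C, hC, hAE, hBE ▸ hBC.symm, hAC⟩
  exact ⟨A, hA, B, hB, hAE, hBE, hAB⟩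

namespace IsPartialZRegulus

variable {R : Set (Submodule K V)} {E : Submodule K V}

theorem existsUnique_directrix_mem (hR : IsPartialZRegulus R) (hE : E ∈ R) {x : V}
    (hxE : x ∈ E) (hx : x ≠ 0) :
    ∃! L, IsDirectrix R L ∧ x ∈ L := by
  obtain ⟨⟨⟨-, hdist⟩, hthree⟩, hmeets⟩ := hR
  obtain ⟨E₁, hE₁, E₂, hE₂, hE₁E, hE₂E, hE₁₂⟩ := hthree.exists_ne_ne E
  have h₁₂ : IsCompl E₁ E₂ := hdist hE₁ hE₂ hE₁₂
  have hx₁ : x ∉ E₁ := fun hx₁ => hx (disjoint_def.1 (hdist hE hE₁ hE₁E.symm).disjoint x hxE hx₁)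
  have hx₂ : x ∉ E₂ := fun hx₂ => hx (disjoint_def.1 (hdist hE hE₂ hE₂E.symm).disjoint x hxE hx₂)
  have hline := isLine_transversal h₁₂ hx₁ hx₂
  refine ⟨transversal h₁₂ x, ⟨⟨hline, ?_⟩, mem_transversal h₁₂ x⟩, ?_⟩
  · exact hmeets _ hline E hE E₁ hE₁ E₂ hE₂ hE₁E.symm hE₂E.symm hE₁₂
      (meets_of_mem (mem_transversal h₁₂ x) hxE hx) (meets_transversal_left h₁₂ hx₂)
      (meets_transversal_right h₁₂ hx₁)
  · rintro L ⟨⟨hL, hLR⟩, hxL⟩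
    exact eq_transversal h₁₂ hL (hLR E₁ hE₁) (hLR E₂ hE₂) hxL hx₁ hx₂

theorem isPoint_inf_of_isDirectrix (hR : IsPartialZRegulus R) (hE : E ∈ R)
    {L : Submodule K V} (hL : IsDirectrix R L) : IsPoint (L ⊓ E) := by
  obtain ⟨E₁, hE₁, -, -, hE₁E, -⟩ := hR.1.2.exists_ne_ne E
  refine hL.1.isPoint_of_lt (inf_le_left.lt_of_ne fun hLE => hL.2 E₁ hE₁ ?_) (hL.2 E hE)
  exact eq_bot_mono (inf_le_inf_right E₁ (inf_eq_left.1 hLE))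
    (hR.1.1.2 hE hE₁ hE₁E.symm).disjoint.eq_bot

end IsPartialZRegulus

theorem directrix_bijection_general
    (R : Set (Submodule K V)) (hR : IsPartialZRegulus R)
    (E : Submodule K V) (hE : E ∈ R) :
    Set.BijOn (fun L => L ⊓ E) {L : Submodule K V | IsDirectrix R L}
      {p : Submodule K V | p ≤ E ∧ IsPoint p} ∧
    ∀ p : Submodule K V, p ≤ E → IsPoint p →
      ∃! L : Submodule K V, IsDirectrix R L ∧ p ≤ L := by
  refine ⟨⟨fun L hL => ⟨inf_le_right, hR.isPoint_inf_of_isDirectrix hE hL⟩, ?_, ?_⟩, ?_⟩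
  · intro L hL L' hL' hLL'
    obtain ⟨x, hx, hx0⟩ := (hR.isPoint_inf_of_isDirectrix hE hL).exists_mem_ne_zero
    have hinf : L ⊓ E = L' ⊓ E := hLL'
    have hx' : x ∈ L' ⊓ E := hinf ▸ hx
    exact (hR.existsUnique_directrix_mem hE hx.2 hx0).unique ⟨hL, hx.1⟩ ⟨hL', hx'.1⟩
  · rintro p ⟨hpE, hp⟩
    obtain ⟨x, hxp, hx0⟩ := hp.exists_mem_ne_zero
    obtain ⟨L, ⟨hL, hxL⟩, -⟩ := hR.existsUnique_directrix_mem hE (hpE hxp) hx0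
    refine ⟨L, hL, ?_⟩
    change L ⊓ E = p
    rw [(hR.isPoint_inf_of_isDirectrix hE hL).eq_span_singleton ⟨hxL, hpE hxp⟩ hx0,
      hp.eq_span_singleton hxp hx0]
  · intro p hpE hp
    obtain ⟨x, hxp, hx0⟩ := hp.exists_mem_ne_zero
    simpa only [hp.eq_span_singleton hxp hx0, span_singleton_le_iff_mem] using
      hR.existsUnique_directrix_mem hE (hpE hxp) hx0

/-- Lemma 4.4. For any element `E` of a partial `Z`-regulus `R`,
the assignment `L ↦ L ⊓ E` is a bijection from the set of directrices of `R`
onto the point set of `E`; consequently each point of `E` is on a unique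
directrix of `R`. -/
theorem directrix_bijection (hV : 2 < Module.rank K V)
    (R : Set (Submodule K V)) (hR : IsPartialZRegulus R)
    (E : Submodule K V) (hE : E ∈ R) :
    Set.BijOn (fun L => L ⊓ E) {L : Submodule K V | IsDirectrix R L}
      {p : Submodule K V | p ≤ E ∧ IsPoint p} ∧
    ∀ p : Submodule K V, p ≤ E → IsPoint p →
      ∃! L : Submodule K V, IsDirectrix R L ∧ p ≤ L :=
  directrix_bijection_general R hR E hE
end

section
/- Let W, E₀, E ∈ 𝒢 with W adjacent to E₀, E distant from E₀, and W not distant from E. Then W ∩ E is a point (a 1-dimensional subspace). -/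
variable {K V : Type*} [DivisionRing K] [AddCommGroup V] [Module K V]

/-- Helper: if the quotient `X ⧸ N` has rank one and `x ∉ N`, then every element
lies in `N ⊔ span {x}`. -/
lemma mem_sup_span_of_quot_rank_one {X : Type*} [AddCommGroup X] [Module K X]
    (N : Submodule K X) (h : Module.rank K (X ⧸ N) = 1)
    {x : X} (hx : x ∉ N) (y : X) : y ∈ N ⊔ Submodule.span K {x} := by
  obtain ⟨v₀, hv₀⟩ := rank_le_one_iff.mp h.le
  obtain ⟨r, hr⟩ := hv₀ (Submodule.Quotient.mk x)
  have hr0 : r ≠ 0 := by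
    rintro rfl
    rw [zero_smul] at hr
    exact hx ((Submodule.Quotient.mk_eq_zero N).mp hr.symm)
  obtain ⟨s, hs⟩ := hv₀ (Submodule.Quotient.mk y)
  have hkey : (Submodule.Quotient.mk (y - (s * r⁻¹) • x) : X ⧸ N) = 0 := by
    have hxq : ((s * r⁻¹) • Submodule.Quotient.mk x : X ⧸ N) = s • v₀ := by
      rw [← hr, smul_smul, mul_assoc, inv_mul_cancel₀ hr0, mul_one]
    rw [Submodule.Quotient.mk_sub, ← Submodule.Quotient.mk_smul, hxq] at *
    rw [hs]
    simp [hxq]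
  have hmem : y - (s * r⁻¹) • x ∈ N := (Submodule.Quotient.mk_eq_zero N).mp hkey
  have hy : y = (y - (s * r⁻¹) • x) + (s * r⁻¹) • x := by abel
  rw [hy]
  exact Submodule.add_mem_sup hmem
    (Submodule.smul_mem _ _ (Submodule.mem_span_singleton_self x))

/-- Lemma 4.9. If `W ∼ E₀`, `E` is distant from `E₀` and `W` is
not distant from `E`, then `W ⊓ E` is a point. -/
theorem inter_is_point (hV : 2 < Module.rank K V)
    (W E₀ E : Submodule K V)
    (hW : W ∈ Grass K V) (hE₀ : E₀ ∈ Grass K V) (hE : E ∈ Grass K V)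
    (hadj : Adjacent W E₀) (hdis : Distant E E₀) (hnd : ¬ Distant W E) :
    IsPoint (W ⊓ E) := by
  obtain ⟨h1, h2⟩ := hadj
  have hdisj : E ⊓ E₀ = ⊥ := hdis.inf_eq_bot
  -- inject W ⊓ E into W ⧸ (W ⊓ E₀)
  set M : Submodule K V := W ⊓ E₀ with hM
  set N : Submodule K W := M.comap W.subtype with hN
  let f : ↥(W ⊓ E) →ₗ[K] (W ⧸ N) :=
    N.mkQ.comp (Submodule.inclusion (inf_le_left : W ⊓ E ≤ W))
  have hfinj : Function.Injective f := by
    rw [← LinearMap.ker_eq_bot]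
    ext ⟨x, hxW, hxE⟩
    simp only [LinearMap.mem_ker, Submodule.mem_bot, f, LinearMap.comp_apply,
      Submodule.mkQ_apply, Submodule.Quotient.mk_eq_zero]
    constructor
    · intro hxN
      have hx0 : x ∈ E ⊓ E₀ := ⟨hxE, (Submodule.mem_comap.mp hxN).2⟩
      rw [hdisj] at hx0
      exact Subtype.ext hx0
    · intro h
      have hx0 : x = 0 := congrArg Subtype.val h
      subst hx0
      simp [hN, hM]
  have hle : Module.rank K ↥(W ⊓ E) ≤ 1 := by
    calc Module.rank K ↥(W ⊓ E) ≤ Module.rank K (W ⧸ N) :=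
          LinearMap.rank_le_of_injective f hfinj
      _ = 1 := h1
  -- now show W ⊓ E ≠ ⊥
  have hne : W ⊓ E ≠ ⊥ := by
    intro hbot
    apply hnd
    constructor
    · rw [disjoint_iff, hbot]
    · -- codisjoint: W ⊔ E = ⊤
      rw [codisjoint_iff]
      -- pick w ∈ W, w ∉ M
      have hNne : N ≠ ⊤ := by
        intro htop
        have h1' : Module.rank K (↥W ⧸ N) = 1 := h1
        rw [htop] at h1'
        have : Subsingleton (↥W ⧸ (⊤ : Submodule K ↥W)) :=
          Submodule.Quotient.subsingleton_iff.mpr rfl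
        rw [rank_subsingleton'] at h1'
        exact one_ne_zero h1'.symm
      obtain ⟨⟨w, hwW⟩, hwN⟩ : ∃ w : W, w ∉ N := by
        by_contra hc
        push_neg at hc
        exact hNne (Submodule.eq_top_iff'.mpr hc)
      have hwM : w ∉ M := hwN
      -- decompose w along V = E ⊔ E₀
      have hwtop : w ∈ E ⊔ E₀ := by
        rw [hdis.sup_eq_top]; trivial
      obtain ⟨e, heE, g, hgE₀, hw⟩ := Submodule.mem_sup.mp hwtop
      have hgM : g ∉ M := by
        intro hgM
        have hgW : g ∈ W := hgM.1
        have heW : e ∈ W := by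
          have : e = w - g := by rw [← hw]; abel
          rw [this]; exact Submodule.sub_mem _ hwW hgW
        have : e ∈ W ⊓ E := ⟨heW, heE⟩
        rw [hbot, Submodule.mem_bot] at this
        subst this
        rw [zero_add] at hw
        subst hw
        exact hwM hgM
      -- E₀ ≤ W ⊔ E
      have hgWE : g ∈ W ⊔ E := by
        have hwWE : w ∈ W ⊔ E := Submodule.mem_sup_left hwW
        have heWE : e ∈ W ⊔ E := Submodule.mem_sup_right heE
        have : g = w - e := by rw [← hw]; abel
        rw [this]; exact Submodule.sub_mem _ hwWE heWE
      have hE₀le : E₀ ≤ W ⊔ E := by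
        intro y hyE₀
        have hgN₀ : (⟨g, hgE₀⟩ : E₀) ∉ M.comap E₀.subtype := by
          intro hc; exact hgM hc
        have := mem_sup_span_of_quot_rank_one (M.comap E₀.subtype) h2 hgN₀ ⟨y, hyE₀⟩
        obtain ⟨m, hm, z, hz, hyz⟩ := Submodule.mem_sup.mp this
        obtain ⟨c, hc⟩ := Submodule.mem_span_singleton.mp hz
        have hy : y = (m : V) + c • g := by
          have := congrArg (E₀.subtype) hyz
          simpa [← hc] using this.symm
        rw [hy]
        have hmWE : (m : V) ∈ W ⊔ E :=
          Submodule.mem_sup_left (Submodule.mem_comap.mp hm).1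
        exact Submodule.add_mem _ hmWE (Submodule.smul_mem _ _ hgWE)
      have htople : (⊤ : Submodule K V) ≤ W ⊔ E := by
        calc (⊤ : Submodule K V) = E ⊔ E₀ := hdis.sup_eq_top.symm
          _ ≤ E ⊔ (W ⊔ E) := sup_le_sup_left hE₀le _
          _ = W ⊔ E := by rw [sup_comm W E, ← sup_assoc, sup_idem]
      exact top_le_iff.mp htople
  have hge : 1 ≤ Module.rank K ↥(W ⊓ E) := by
    have : Nontrivial ↥(W ⊓ E) := Submodule.nontrivial_iff_ne_bot.mpr hne
    exact Cardinal.one_le_iff_pos.mpr rank_pos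
  exact le_antisymm hle hge
end
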